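/- arXiv:2301.12182 — 8 statements merged into one kernel-verified Lean document; each statement's English description precedes it below -/
import Mathlib

section
/- Let K ⊆ ℝ^d and L ⊆ ℝ^m be convex bodies such that there is a linear map A : ℝ^m → ℝ^d with K = A(L). Then for every w ∈ int(K) and every v ∈ A⁻¹(w) ∩ int(L), one has ca(K,w) ≤ ca(L,v). Moreover, if m = d and A is invertible, then ca(K,w) = ca(L,v). -/
open Pointwise

/-- The coefficient of asymmetry of a point `w` in a convex set `K`:
`ca(K,w) = min{λ ≥ 1 : w − K ⊆ λ(K − w)}`. -/
noncomputable def ca {E : Type*} [AddCommGroup E] [Module ℝ E] (K : Set E) (w : E) : ℝ :=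
  sInf {l : ℝ | 1 ≤ l ∧ ({w} : Set E) - K ⊆ l • (K - {w})}

lemma ca_set_nonempty {E : Type*} [NormedAddCommGroup E] [NormedSpace ℝ E]
    (L : Set E) (hb : Bornology.IsBounded L) {v : E} (hv : v ∈ interior L) :
    {l : ℝ | 1 ≤ l ∧ ({v} : Set E) - L ⊆ l • (L - {v})}.Nonempty := by
  obtain ⟨r, hr, hball⟩ := Metric.isOpen_iff.mp isOpen_interior v hv
  obtain ⟨R, hR⟩ := hb.subset_closedBall v
  set r' : ℝ := r / 2 with hr'
  have hr'pos : 0 < r' := by positivity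
  have hball' : Metric.closedBall v r' ⊆ L := by
    refine (Metric.closedBall_subset_ball ?_).trans (hball.trans interior_subset)
    simpa [hr'] using half_lt_self hr
  set l : ℝ := max 1 (R / r') with hl
  have hl1 : (1 : ℝ) ≤ l := le_max_left _ _
  have hlpos : 0 < l := lt_of_lt_of_le one_pos hl1
  refine ⟨l, hl1, ?_⟩
  rintro x hx
  rw [Set.singleton_sub] at hx
  obtain ⟨y, hy, rfl⟩ := hx
  have hxy : ‖v - y‖ ≤ R := by
    have := hR hy
    rw [Metric.mem_closedBall, dist_comm] at this
    simpa [dist_eq_norm] using this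
  have key : l • (l⁻¹ • (v - y)) = v - y := by
    rw [smul_smul, mul_inv_cancel₀ hlpos.ne', one_smul]
  refine ⟨l⁻¹ • (v - y), ?_, key⟩
  rw [Set.sub_singleton]
  refine ⟨v + l⁻¹ • (v - y), ?_, add_sub_cancel_left v _⟩
  apply hball'
  rw [Metric.mem_closedBall, dist_eq_norm]
  have heq : ‖v + l⁻¹ • (v - y) - v‖ = l⁻¹ * ‖v - y‖ := by
    rw [add_sub_cancel_left, norm_smul]
    rw [Real.norm_eq_abs, abs_inv, abs_of_pos hlpos]
  rw [heq]
  have hRl : R ≤ l * r' := by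
    have h2 : R / r' ≤ l := le_max_right _ _
    calc R = (R / r') * r' := by field_simp
    _ ≤ l * r' := by nlinarith
  calc l⁻¹ * ‖v - y‖ ≤ l⁻¹ * R := by
        apply mul_le_mul_of_nonneg_left hxy (le_of_lt (inv_pos.mpr hlpos))
    _ ≤ r' := by
        rw [inv_mul_le_iff₀ hlpos]
        linarith [hRl]

lemma ca_image_le {E F : Type*} [AddCommGroup E] [Module ℝ E] [AddCommGroup F] [Module ℝ F]
    (K : Set F) (L : Set E) (A : E →ₗ[ℝ] F) (hKL : K = A '' L) (v : E)
    (hne : {l : ℝ | 1 ≤ l ∧ ({v} : Set E) - L ⊆ l • (L - {v})}.Nonempty) :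
    ca K (A v) ≤ ca L v := by
  apply csInf_le_csInf _ hne
  · rintro l ⟨hl1, hl⟩
    refine ⟨hl1, ?_⟩
    rintro x hx
    rw [Set.singleton_sub] at hx
    obtain ⟨b, hb, rfl⟩ := hx
    rw [hKL] at hb
    obtain ⟨y, hy, rfl⟩ := hb
    have hmem : v - y ∈ l • (L - {v}) := by
      apply hl
      rw [Set.singleton_sub]
      exact ⟨y, hy, rfl⟩
    obtain ⟨z, hz, hzeq⟩ := hmem
    rw [Set.sub_singleton] at hz
    obtain ⟨c, hc, rfl⟩ := hz
    have hzeq' : l • (c - v) = v - y := hzeq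
    refine ⟨A c - A v, ?_, ?_⟩
    · rw [Set.sub_singleton]
      refine ⟨A c, ?_, rfl⟩
      rw [hKL]; exact ⟨c, hc, rfl⟩
    · show l • (A c - A v) = A v - A y
      rw [← map_sub, ← map_smul, hzeq', map_sub]
  · exact ⟨1, fun l hl => hl.1⟩

theorem ca_projections
    {d m : ℕ} (K : Set (Fin d → ℝ)) (L : Set (Fin m → ℝ))
    (hKconv : Convex ℝ K) (hKcpt : IsCompact K) (hKint : (interior K).Nonempty)
    (hLconv : Convex ℝ L) (hLcpt : IsCompact L) (hLint : (interior L).Nonempty)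
    (A : (Fin m → ℝ) →ₗ[ℝ] (Fin d → ℝ)) (hKL : K = A '' L) :
    (∀ w ∈ interior K, ∀ v ∈ interior L, A v = w → ca K w ≤ ca L v) ∧
      (m = d → Function.Bijective A →
        ∀ w ∈ interior K, ∀ v ∈ interior L, A v = w → ca K w = ca L v) := by
  have hle : ∀ w ∈ interior K, ∀ v ∈ interior L, A v = w → ca K w ≤ ca L v := by
    intro w hw v hv hav
    subst hav
    exact ca_image_le K L A hKL v (ca_set_nonempty L hLcpt.isBounded hv)
  refine ⟨hle, fun _ hbij w hw v hv hav => ?_⟩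
  refine le_antisymm (hle w hw v hv hav) ?_
  set e := LinearEquiv.ofBijective A hbij with he
  have hLK : L = (e.symm : (Fin d → ℝ) →ₗ[ℝ] (Fin m → ℝ)) '' K := by
    rw [hKL]
    ext x
    constructor
    · intro hx
      refine ⟨A x, ⟨x, hx, rfl⟩, ?_⟩
      show e.symm (A x) = x
      rw [show A x = e x from rfl, e.symm_apply_apply]
    · rintro ⟨y, ⟨z, hz, rfl⟩, rfl⟩
      show e.symm (A z) ∈ L
      rw [show A z = e z from rfl, e.symm_apply_apply]
      exact hz
  have hv' : (e.symm : (Fin d → ℝ) →ₗ[ℝ] (Fin m → ℝ)) w = v := by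
    show e.symm w = v
    rw [← hav, show A v = e v from rfl, e.symm_apply_apply]
  have hfin := ca_image_le L K (e.symm : (Fin d → ℝ) →ₗ[ℝ] (Fin m → ℝ)) hLK w
    (ca_set_nonempty K hKcpt.isBounded hw)
  rwa [show ((e.symm : (Fin d → ℝ) →ₗ[ℝ] (Fin m → ℝ)) w) = v from hv'] at hfin
end

section
/- Let P = [0,v_1] + ... + [0,v_d] ⊆ ℝ^d be a (full-dimensional) lattice parallelepiped with generators v_1,...,v_d ∈ ℤ^d, and let w = Σ_{i=1}^d α_i v_i ∈ int(P) for some α = (α_1,...,α_d) ∈ (0,1)^d. Then ca(P,w) = (1/2 + max_{1≤i≤d} |α_i − 1/2|) / (1/2 − max_{1≤i≤d} |α_i − 1/2|). -/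
open Pointwise

/-- `ca` is invariant under linear isomorphisms. -/
lemma ca_image {E F : Type*} [AddCommGroup E] [Module ℝ E] [AddCommGroup F] [Module ℝ F]
    (T : E ≃ₗ[ℝ] F) (K : Set E) (w : E) : ca (⇑T '' K) (T w) = ca K w := by
  unfold ca
  congr 1
  ext l
  simp only [Set.mem_setOf_eq, and_congr_right_iff]
  intro _
  constructor
  · intro h y hy
    obtain ⟨a, ha, x, hx, rfl⟩ := Set.mem_sub.mp hy
    obtain rfl : w = a := (Set.mem_singleton_iff.mp ha).symm
    have hmem : T w - T x ∈ ({T w} : Set F) - ⇑T '' K :=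
      Set.sub_mem_sub rfl ⟨x, hx, rfl⟩
    obtain ⟨z, hz, hzq⟩ := Set.mem_smul_set.mp (h hmem)
    obtain ⟨b, ⟨k, hk, rfl⟩, c, hc, rfl⟩ := Set.mem_sub.mp hz
    obtain rfl : T w = c := (Set.mem_singleton_iff.mp hc).symm
    refine Set.mem_smul_set.mpr ⟨k - w, Set.sub_mem_sub hk rfl, ?_⟩
    apply T.injective
    calc T (l • (k - w)) = l • (T k - T w) := by rw [map_smul, map_sub]
      _ = T w - T x := hzq
      _ = T (w - x) := (map_sub T w x).symm
  · intro h y hy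
    obtain ⟨a, ha, b, ⟨x, hx, rfl⟩, rfl⟩ := Set.mem_sub.mp hy
    obtain rfl : T w = a := (Set.mem_singleton_iff.mp ha).symm
    have hmem : w - x ∈ ({w} : Set E) - K := Set.sub_mem_sub rfl hx
    obtain ⟨z, hz, hzq⟩ := Set.mem_smul_set.mp (h hmem)
    obtain ⟨k, hk, c, hc, rfl⟩ := Set.mem_sub.mp hz
    obtain rfl : w = c := (Set.mem_singleton_iff.mp hc).symm
    refine Set.mem_smul_set.mpr ⟨T k - T w, Set.sub_mem_sub ⟨k, hk, rfl⟩ rfl, ?_⟩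
    calc l • (T k - T w) = T (l • (k - w)) := by rw [map_smul, map_sub]
      _ = T (w - x) := by rw [hzq]
      _ = T w - T x := map_sub T w x

lemma helper_mem {E : Type*} [AddCommGroup E] [Module ℝ E]
    (C : Set E) (α : E) (l : ℝ) (hl : 0 < l) :
    (({α} : Set E) - C ⊆ l • (C - {α})) ↔ ∀ x ∈ C, l⁻¹ • (α - x) + α ∈ C := by
  constructor
  · intro h x hx
    have hmem : α - x ∈ ({α} : Set E) - C := Set.sub_mem_sub rfl hx
    have h2 := h hmem
    rw [Set.mem_smul_set_iff_inv_smul_mem₀ hl.ne'] at h2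
    obtain ⟨c, hc, b, hb, hcb⟩ := Set.mem_sub.mp h2
    obtain rfl : α = b := (Set.mem_singleton_iff.mp hb).symm
    have : c = l⁻¹ • (α - x) + α := by rw [← hcb]; abel
    rwa [← this]
  · intro h y hy
    obtain ⟨a, ha, x, hx, rfl⟩ := Set.mem_sub.mp hy
    obtain rfl : α = a := (Set.mem_singleton_iff.mp ha).symm
    rw [Set.mem_smul_set_iff_inv_smul_mem₀ hl.ne']
    exact Set.mem_sub.mpr ⟨l⁻¹ • (α - x) + α, h x hx, α, rfl, add_sub_cancel_right _ _⟩

set_option maxHeartbeats 1000000 in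
lemma ca_box {d : ℕ} (α : Fin d → ℝ) (hα : ∀ i, α i ∈ Set.Ioo (0 : ℝ) 1) :
    ca (Set.Icc (0 : Fin d → ℝ) 1) α
      = (1/2 + ⨆ i, |α i - 1/2|) / (1/2 - ⨆ i, |α i - 1/2|) := by
  set M := ⨆ i, |α i - 1/2| with hMdef
  have hMb : BddAbove (Set.range fun i => |α i - 1/2|) :=
    Set.Finite.bddAbove (Set.finite_range _)
  have hMle : ∀ i, |α i - 1/2| ≤ M := fun i => le_ciSup hMb i
  have hM0 : 0 ≤ M := by
    rcases isEmpty_or_nonempty (Fin d) with hE | hN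
    · simp [hMdef]
    · exact le_trans (abs_nonneg _) (hMle (Classical.arbitrary _))
  have hMlt : M < 1/2 := by
    rcases isEmpty_or_nonempty (Fin d) with hE | hN
    · simp [hMdef]
    · obtain ⟨i0, hi0⟩ := Finite.exists_max (fun i => |α i - 1/2|)
      have h1 : M ≤ |α i0 - 1/2| := ciSup_le hi0
      have h2 : |α i0 - 1/2| < 1/2 := by
        rcases hα i0 with ⟨ha, hb⟩
        rw [abs_lt]; constructor <;> linarith
      linarith
  have hpos : 0 < 1/2 - M := by linarith
  have hc1 : 1 ≤ (1/2 + M) / (1/2 - M) := by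
    rw [le_div_iff₀ hpos]; linarith
  have hset : {l : ℝ | 1 ≤ l ∧ ({α} : Set (Fin d → ℝ)) - Set.Icc 0 1
        ⊆ l • (Set.Icc 0 1 - {α})} = Set.Ici ((1/2 + M) / (1/2 - M)) := by
    ext l
    simp only [Set.mem_setOf_eq, Set.mem_Ici]
    constructor
    · rintro ⟨hl1, hsub⟩
      have hl0 : (0 : ℝ) < l := lt_of_lt_of_le one_pos hl1
      rw [div_le_iff₀ hpos]
      rw [helper_mem _ _ _ hl0] at hsub
      rcases isEmpty_or_nonempty (Fin d) with hE | hN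
      · have : M = 0 := by simp [hMdef]
        rw [this]; linarith
      · obtain ⟨i0, hi0⟩ := Finite.exists_max (fun i => |α i - 1/2|)
        have hMi : M = |α i0 - 1/2| := le_antisymm (ciSup_le hi0) (hMle i0)
        have hone : (1 : Fin d → ℝ) ∈ Set.Icc (0 : Fin d → ℝ) 1 :=
          Set.mem_Icc.mpr ⟨zero_le_one, le_refl 1⟩
        have hzero : (0 : Fin d → ℝ) ∈ Set.Icc (0 : Fin d → ℝ) 1 :=
          Set.mem_Icc.mpr ⟨le_refl 0, zero_le_one⟩
        have h1 := hsub 1 hone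
        have h0 := hsub 0 hzero
        rw [Set.mem_Icc] at h1 h0
        have hlow : 0 ≤ l⁻¹ * (α i0 - 1) + α i0 := by
          have := h1.1 i0
          simpa using this
        have hup : l⁻¹ * (α i0 - 0) + α i0 ≤ 1 := by
          have := h1.2 i0
          have h2 := h0.2 i0
          simpa using h2
        have hlow' : 0 ≤ (α i0 - 1) + l * α i0 := by
          have heq : (α i0 - 1) + l * α i0 = l * (l⁻¹ * (α i0 - 1) + α i0) := by
            rw [mul_add, ← mul_assoc, mul_inv_cancel₀ hl0.ne', one_mul]
          rw [heq]
          exact mul_nonneg hl0.le hlow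
        have hup' : α i0 + l * α i0 ≤ l := by
          have heq : α i0 + l * α i0 = l * (l⁻¹ * (α i0 - 0) + α i0) := by
            rw [sub_zero, mul_add, ← mul_assoc, mul_inv_cancel₀ hl0.ne', one_mul]
          rw [heq]
          calc l * (l⁻¹ * (α i0 - 0) + α i0) ≤ l * 1 :=
                mul_le_mul_of_nonneg_left hup hl0.le
            _ = l := mul_one l
        rw [hMi]
        rcases abs_cases (α i0 - 1/2) with ⟨heq, h'⟩ | ⟨heq, h'⟩ <;> rw [heq] <;>
          nlinarith [hlow', hup']
    · intro hcl
      have hl1 : 1 ≤ l := le_trans hc1 hcl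
      have hl0 : (0 : ℝ) < l := by linarith
      have hkey : 1/2 + M ≤ l * (1/2 - M) := (div_le_iff₀ hpos).mp hcl
      refine ⟨hl1, ?_⟩
      rw [helper_mem _ _ _ hl0]
      intro x hx
      rw [Set.mem_Icc] at hx ⊢
      have hkeyi : ∀ i, 1/2 + |α i - 1/2| ≤ l * (1/2 - |α i - 1/2|) := by
        intro i
        have h1 : l * (1/2 - M) ≤ l * (1/2 - |α i - 1/2|) :=
          mul_le_mul_of_nonneg_left (by linarith [hMle i]) hl0.le
        linarith [hMle i]
      constructor
      · intro i
        have hxi : 0 ≤ x i := hx.1 i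
        have hxi' : x i ≤ 1 := hx.2 i
        have hai := hα i
        simp only [Pi.add_apply, Pi.smul_apply, Pi.sub_apply, Pi.zero_apply, smul_eq_mul]
        have heq : l⁻¹ * (α i - x i) + α i = l⁻¹ * ((α i - x i) + l * α i) := by
          rw [mul_add, ← mul_assoc, inv_mul_cancel₀ hl0.ne', one_mul]
        rw [heq]
        apply mul_nonneg (inv_nonneg.mpr hl0.le)
        rcases abs_cases (α i - 1/2) with ⟨he, h'⟩ | ⟨he, h'⟩ <;>
          [skip; skip] <;>
          · have hki := hkeyi i
            rw [he] at hki
            nlinarith [hki, mul_nonneg (by linarith : (0:ℝ) ≤ l - 1)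
              (by linarith [hai.1] : (0:ℝ) ≤ α i)]
      · intro i
        have hxi : 0 ≤ x i := hx.1 i
        have hxi' : x i ≤ 1 := hx.2 i
        have hai := hα i
        simp only [Pi.add_apply, Pi.smul_apply, Pi.sub_apply, Pi.one_apply, smul_eq_mul]
        have heq : l⁻¹ * (α i - x i) + α i = l⁻¹ * ((α i - x i) + l * α i) := by
          rw [mul_add, ← mul_assoc, inv_mul_cancel₀ hl0.ne', one_mul]
        rw [heq]
        have hinner : (α i - x i) + l * α i ≤ l := by
          rcases abs_cases (α i - 1/2) with ⟨he, h'⟩ | ⟨he, h'⟩ <;>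
            · have hki := hkeyi i
              rw [he] at hki
              nlinarith [hki, mul_nonneg (by linarith : (0:ℝ) ≤ l - 1)
                (by linarith [hai.2] : (0:ℝ) ≤ 1 - α i)]
        calc l⁻¹ * ((α i - x i) + l * α i) ≤ l⁻¹ * l :=
              mul_le_mul_of_nonneg_left hinner (inv_nonneg.mpr hl0.le)
          _ = 1 := inv_mul_cancel₀ hl0.ne'
  unfold ca
  rw [hset, csInf_Ici]

theorem ca_parallelepipeds
    {d : ℕ} (v : Fin d → Fin d → ℤ)
    (hind : LinearIndependent ℝ (fun j => fun i => (v j i : ℝ)))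
    (P : Set (Fin d → ℝ))
    (hP : P = ∑ j : Fin d, segment ℝ (0 : Fin d → ℝ) (fun i => (v j i : ℝ)))
    (α : Fin d → ℝ) (hα : ∀ i, α i ∈ Set.Ioo (0 : ℝ) 1)
    (w : Fin d → ℝ) (hw : w = ∑ j : Fin d, α j • (fun i => (v j i : ℝ)))
    (hwint : w ∈ interior P) :
    ca P w = (1/2 + ⨆ i, |α i - 1/2|) / (1/2 - ⨆ i, |α i - 1/2|) := by
  classical
  rw [← ca_box α hα]
  rcases Nat.eq_zero_or_pos d with hd | hd
  · subst hd
    have hPC : P = Set.Icc (0 : Fin 0 → ℝ) 1 := by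
      rw [hP]
      ext x
      simp [Set.mem_Icc, Pi.le_def, Subsingleton.elim x 0]
    have hwα : w = α := Subsingleton.elim w α
    rw [hPC, hwα]
  · haveI : Nonempty (Fin d) := Fin.pos_iff_nonempty.mp hd
    have hcard : Fintype.card (Fin d) = Module.finrank ℝ (Fin d → ℝ) := by
      simp [Module.finrank_fin_fun]
    set B := basisOfLinearIndependentOfCardEqFinrank hind hcard with hBdef
    set T := B.equivFun.symm with hTdef
    have hB : ∀ j, B j = fun i => (v j i : ℝ) := fun j => by
      rw [hBdef, coe_basisOfLinearIndependentOfCardEqFinrank]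
    have hT : ∀ t : Fin d → ℝ, T t = ∑ j, t j • (fun i => (v j i : ℝ)) := by
      intro t
      rw [hTdef, Module.Basis.equivFun_symm_apply]
      exact Finset.sum_congr rfl fun j _ => by rw [hB]
    have hPT : P = ⇑T '' Set.Icc 0 1 := by
      rw [hP, ← parallelepiped_eq_sum_segment]
      have hfun : (fun t : Fin d → ℝ => ∑ i, t i • (fun i' => (v i i' : ℝ))) = ⇑T :=
        funext fun t => (hT t).symm
      rw [parallelepiped, hfun]
    have hwT : w = T α := by rw [hw, hT]
    rw [hPT, hwT, ca_image]
end

section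
/- Let C ⊆ ℝ^d be a closed convex set whose recession cone rec(C) := {r ∈ ℝ^d : x + r ∈ C for all x ∈ C} is a linear subspace L ⊆ ℝ^d. Then for every w ∈ int(C), one has ca(C,w) = ca(C|L^⊥, w|L^⊥), where X|L^⊥ denotes the orthogonal projection of X onto the orthogonal complement L^⊥. -/
open Pointwise

/-!
For `λ > 0` the inclusion `w - C ⊆ λ • (C - w)` says that `C` is mapped into itself by the
homothety `x ↦ w + λ⁻¹ • (w - x)`. The hypothesis on the recession cone gives `C + L = C`, so `C`
is the full preimage of its image under the orthogonal projection `P` onto `Lᗮ`. Since the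
homothety commutes with the linear map `P`, `C` is stable under it exactly when `P '' C` is
stable under the homothety centred at `P w`, so the two sets defining the coefficients of asymmetry coincide.
-/

theorem singleton_sub_subset_smul_sub_singleton_iff {𝕜 E : Type*} [DivisionRing 𝕜]
    [AddCommGroup E] [Module 𝕜 E] {K : Set E} {w : E} {l : 𝕜} (hl : l ≠ 0) :
    ({w} : Set E) - K ⊆ l • (K - {w}) ↔ ∀ x ∈ K, w + l⁻¹ • (w - x) ∈ K := by
  rw [Set.singleton_sub, Set.image_subset_iff, Set.sub_singleton]
  refine forall₂_congr fun x _ => ?_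
  simp only [Set.mem_preimage, Set.mem_smul_set_iff_inv_smul_mem₀ hl, Set.mem_image,
    sub_eq_iff_eq_add, exists_eq_right, add_comm w]

theorem preimage_image_eq_of_add_ker_subset {R E F : Type*} [Ring R] [AddCommGroup E]
    [Module R E] [AddCommGroup F] [Module R F] (f : E →ₗ[R] F) {K : Set E}
    (hK : ∀ x ∈ K, ∀ r ∈ LinearMap.ker f, x + r ∈ K) :
    f ⁻¹' (f '' K) = K := by
  refine subset_antisymm ?_ (Set.subset_preimage_image f K)
  rintro x ⟨y, hy, hyx⟩
  simpa using hK y hy (x - y) (by simp [hyx])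

theorem ca_image_eq_of_add_ker_subset {E F : Type*} [AddCommGroup E] [Module ℝ E]
    [AddCommGroup F] [Module ℝ F] (f : E →ₗ[ℝ] F) {K : Set E}
    (hK : ∀ x ∈ K, ∀ r ∈ LinearMap.ker f, x + r ∈ K) (w : E) :
    ca (f '' K) (f w) = ca K w := by
  unfold ca
  congr 1
  ext l
  refine and_congr_right fun hl => ?_
  have hl0 : l ≠ 0 := (zero_lt_one.trans_le hl).ne'
  rw [singleton_sub_subset_smul_sub_singleton_iff hl0,
    singleton_sub_subset_smul_sub_singleton_iff hl0, Set.forall_mem_image]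
  refine forall₂_congr fun x _ => ?_
  rw [← map_sub, ← map_smul, ← map_add, ← Set.mem_preimage,
    preimage_image_eq_of_add_ker_subset f hK]

theorem ca_linear_recession_cone_general
    {d : ℕ} (C : Set (EuclideanSpace ℝ (Fin d)))
    (L : Submodule ℝ (EuclideanSpace ℝ (Fin d)))
    (hrec : (L : Set (EuclideanSpace ℝ (Fin d))) = {r | ∀ x ∈ C, x + r ∈ C})
    (w : EuclideanSpace ℝ (Fin d)) :
    ca C w = ca ((fun x => ((Submodule.orthogonalProjectionOnto Lᗮ x : Lᗮ) : EuclideanSpace ℝ (Fin d))) '' C)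
      ((Submodule.orthogonalProjectionOnto Lᗮ w : Lᗮ) : EuclideanSpace ℝ (Fin d)) := by
  have hC : ∀ x ∈ C, ∀ r ∈ LinearMap.ker Lᗮ.starProjection.toLinearMap, x + r ∈ C := by
    intro x hx r hr
    rw [LinearMap.mem_ker, ContinuousLinearMap.coe_coe, Submodule.starProjection_apply_eq_zero_iff,
      Submodule.orthogonal_orthogonal, ← SetLike.mem_coe, hrec] at hr
    exact hr x hx
  exact (ca_image_eq_of_add_ker_subset _ hC w).symm

theorem ca_linear_recession_cone
    {d : ℕ} (C : Set (EuclideanSpace ℝ (Fin d)))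
    (hCconv : Convex ℝ C) (hCclosed : IsClosed C)
    (L : Submodule ℝ (EuclideanSpace ℝ (Fin d)))
    (hrec : (L : Set (EuclideanSpace ℝ (Fin d))) = {r | ∀ x ∈ C, x + r ∈ C})
    (w : EuclideanSpace ℝ (Fin d)) (hw : w ∈ interior C) :
    ca C w = ca ((fun x => ((Submodule.orthogonalProjectionOnto Lᗮ x : Lᗮ) : EuclideanSpace ℝ (Fin d))) '' C)
      ((Submodule.orthogonalProjectionOnto Lᗮ w : Lᗮ) : EuclideanSpace ℝ (Fin d)) :=
  ca_linear_recession_cone_general C L hrec w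
end

section
/- Let n ∈ ℤ^d_{>0} be a velocity vector and let 0 < γ ≤ 1/2. Then the following are equivalent: (i) there exists β ∈ ℝ such that ‖β n_i‖_ℤ ≥ γ for every 1 ≤ i ≤ d; (ii) there exists a lattice point w ∈ int(Z(n)) ∩ ℤ^d such that w ∈ c_n + (1 − 2γ)(Z(n) − c_n), where c_n := (𝟙 + n)/2 and 𝟙 is the all-ones vector. -/
open Pointwise

/-- A point of `ℝ^d` all of whose coordinates are integers. -/
def IsLatticePoint {d : ℕ} (x : Fin d → ℝ) : Prop := ∀ i, ∃ z : ℤ, x i = (z : ℝ)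

/-- The distance from a real number to the nearest integer. -/
noncomputable def distToInt (x : ℝ) : ℝ := |x - round x|

/-!
Write the points of `Z(n)` as `t n + u` with `u ∈ [0,1]^d`. A point `w` lies in the shrunk copy
`c + (1 - 2γ)(Z(n) - c)` iff `w - s n ∈ [γ, 1 - γ]^d` for some `s`, and for a lattice point `w` this
says precisely that every `s n_i` is at distance at least `γ` from the integers. For `γ > 0` such a
`w` lies in the interior of `Z(n)`.
When `γ = 1/2` the shrunk copy degenerates to the point `c`, which must then be shown to be a
lattice point: all `2 β n_i` are odd integers, so `gcd(n) = 1` makes `2β` an odd integer by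
Bézout, hence every `n_i` is odd.
-/

open Set Filter Topology

lemma le_distToInt_iff (γ x : ℝ) : γ ≤ distToInt x ↔ ∃ k : ℤ, (k : ℝ) - x ∈ Icc γ (1 - γ) := by
  rw [distToInt, abs_sub_round_eq_min, le_min_iff, ← Int.self_sub_floor]
  constructor
  · rintro ⟨h₁, h₂⟩
    exact ⟨⌊x⌋ + 1, by push_cast; constructor <;> linarith⟩
  · rintro ⟨k, h₁, h₂⟩
    rcases le_or_gt γ 0 with hγ | hγ
    · constructor <;> linarith [Int.floor_le x, Int.lt_floor_add_one x]
    · have hk : ⌊x⌋ = k - 1 := by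
        rw [Int.floor_eq_iff]; push_cast; constructor <;> linarith
      rw [hk]; push_cast; constructor <;> linarith

lemma forall_le_distToInt_iff {d : ℕ} (γ : ℝ) (x : Fin d → ℝ) :
    (∀ i, γ ≤ distToInt (x i)) ↔ ∃ w, IsLatticePoint w ∧ ∀ i, w i - x i ∈ Icc γ (1 - γ) := by
  simp only [le_distToInt_iff]
  constructor
  · intro h
    choose k hk using h
    exact ⟨fun i => k i, fun i => ⟨k i, rfl⟩, hk⟩
  · rintro ⟨w, hw, h⟩ i
    obtain ⟨k, hk⟩ := hw i
    exact ⟨k, hk ▸ h i⟩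

lemma exists_intCast_eq_of_forall_mul_eq_intCast {ι : Type*} [Fintype ι] {n : ι → ℤ}
    (hgcd : Finset.univ.gcd n = 1) {x : ℝ} (h : ∀ i, ∃ z : ℤ, x * n i = z) : ∃ m : ℤ, x = m := by
  obtain ⟨g, hg⟩ := Finset.gcd_eq_sum_mul Finset.univ n
  choose z hz using h
  refine ⟨∑ i, z i * g i, ?_⟩
  calc x = x * ((Finset.univ.gcd n : ℤ) : ℝ) := by rw [hgcd, Int.cast_one, mul_one]
    _ = ((∑ i, z i * g i : ℤ) : ℝ) := by
      simp only [hg, Int.cast_sum, Int.cast_mul, Finset.mul_sum, ← mul_assoc, hz]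

section Zonotope

variable {ι : Type*}

noncomputable def zonotope (v : ι → ℝ) : Set (ι → ℝ) := range (fun t : ℝ => t • v) + Icc 0 1

noncomputable def zonotopeCenter (v : ι → ℝ) : ι → ℝ := fun i => (1 + v i) / 2

noncomputable def shrunkZonotope (γ : ℝ) (v : ι → ℝ) : Set (ι → ℝ) :=
  {zonotopeCenter v} + (1 - 2 * γ) • (zonotope v - {zonotopeCenter v})

lemma mem_zonotope_iff {v x : ι → ℝ} : x ∈ zonotope v ↔ ∃ t : ℝ, ∀ i, x i - t * v i ∈ Icc 0 1 := by
  constructor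
  · rintro ⟨_, ⟨t, rfl⟩, u, hu, rfl⟩
    exact ⟨t, fun i => by simpa using ⟨hu.1 i, hu.2 i⟩⟩
  · rintro ⟨t, ht⟩
    exact ⟨t • v, ⟨t, rfl⟩, x - t • v, ⟨fun i => (ht i).1, fun i => (ht i).2⟩, add_sub_cancel _ _⟩

lemma mem_interior_zonotope [Finite ι] {v x : ι → ℝ} (t : ℝ)
    (h : ∀ i, x i - t * v i ∈ Ioo 0 1) : x ∈ interior (zonotope v) := by
  rw [mem_interior_iff_mem_nhds]
  have hnhds : ∀ᶠ y in 𝓝 x, ∀ i, y i - t * v i ∈ Ioo 0 1 := eventually_all.2 fun i =>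
    ((continuous_apply i).sub continuous_const).continuousAt.eventually_mem
      (isOpen_Ioo.mem_nhds (h i))
  filter_upwards [hnhds] with y hy
  exact mem_zonotope_iff.2 ⟨t, fun i => Ioo_subset_Icc_self (hy i)⟩

lemma zonotopeCenter_mem_interior [Finite ι] (v : ι → ℝ) :
    zonotopeCenter v ∈ interior (zonotope v) :=
  mem_interior_zonotope (1 / 2) fun i => by simp only [zonotopeCenter]; constructor <;> linarith

lemma mem_shrunkZonotope_iff {γ : ℝ} {v w : ι → ℝ} :
    w ∈ shrunkZonotope γ v ↔
      ∃ z ∈ zonotope v, zonotopeCenter v + (1 - 2 * γ) • (z - zonotopeCenter v) = w := by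
  simp [shrunkZonotope, singleton_add, sub_singleton, mem_smul_set, eq_neg_add_iff_add_eq]

lemma zonotopeCenter_mem_shrunkZonotope (γ : ℝ) (v : ι → ℝ) :
    zonotopeCenter v ∈ shrunkZonotope γ v := by
  refine mem_shrunkZonotope_iff.2
    ⟨zonotopeCenter v, mem_zonotope_iff.2 ⟨1 / 2, fun i => ?_⟩, by simp⟩
  simp only [zonotopeCenter]
  constructor <;> linarith

lemma exists_sub_mul_mem_Icc_of_mem_shrunkZonotope {γ : ℝ} (hγ : γ ≤ 1 / 2) {v w : ι → ℝ}
    (hw : w ∈ shrunkZonotope γ v) : ∃ s : ℝ, ∀ i, w i - s * v i ∈ Icc γ (1 - γ) := by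
  obtain ⟨z, hz, rfl⟩ := mem_shrunkZonotope_iff.1 hw
  obtain ⟨t, ht⟩ := mem_zonotope_iff.1 hz
  refine ⟨(1 - 2 * γ) * t + γ, fun i => ?_⟩
  obtain ⟨hu₀, hu₁⟩ := ht i
  simp only [zonotopeCenter, Pi.add_apply, Pi.smul_apply, Pi.sub_apply, smul_eq_mul]
  constructor <;> nlinarith

lemma mem_shrunkZonotope_of_sub_mul_mem_Icc {γ : ℝ} (hγ : γ < 1 / 2) {v w : ι → ℝ} {s : ℝ}
    (hs : ∀ i, w i - s * v i ∈ Icc γ (1 - γ)) : w ∈ shrunkZonotope γ v := by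
  have hr : 0 < 1 - 2 * γ := by linarith
  refine mem_shrunkZonotope_iff.2
    ⟨zonotopeCenter v + (1 - 2 * γ)⁻¹ • (w - zonotopeCenter v), ?_, ?_⟩
  · refine mem_zonotope_iff.2 ⟨(s - γ) / (1 - 2 * γ), fun i => ?_⟩
    obtain ⟨h₁, h₂⟩ := hs i
    simp only [zonotopeCenter, Pi.add_apply, Pi.smul_apply, Pi.sub_apply, smul_eq_mul]
    have hrw : (1 + v i) / 2 + (1 - 2 * γ)⁻¹ * (w i - (1 + v i) / 2) - (s - γ) / (1 - 2 * γ) * v i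
        = (w i - s * v i - γ) / (1 - 2 * γ) := by
      field_simp
      ring
    rw [hrw, mem_Icc, le_div_iff₀ hr, div_le_iff₀ hr]
    constructor <;> linarith
  · rw [add_sub_cancel_left, smul_inv_smul₀ hr.ne', add_sub_cancel]

end Zonotope

lemma isLatticePoint_zonotopeCenter {d : ℕ} {n : Fin d → ℤ} (hgcd : Finset.univ.gcd n = 1)
    {w : Fin d → ℝ} (hw : IsLatticePoint w) {β : ℝ} (h : ∀ i, w i - β * n i = 1 / 2) :
    IsLatticePoint (zonotopeCenter fun i => (n i : ℝ)) := by
  have h2β : ∀ i, ∃ z : ℤ, 2 * β * n i = z := fun i => by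
    obtain ⟨k, hk⟩ := hw i
    exact ⟨2 * k - 1, by push_cast; linarith [h i]⟩
  obtain ⟨m, hm⟩ := exists_intCast_eq_of_forall_mul_eq_intCast hgcd h2β
  intro i
  obtain ⟨k, hk⟩ := hw i
  have hmn : m * n i = 2 * (k - 1) + 1 := by
    have : (m : ℝ) * n i = 2 * (k - 1) + 1 := by rw [← hm]; linarith [h i]
    exact_mod_cast this
  obtain ⟨j, hj⟩ := (Int.odd_mul.1 ⟨k - 1, hmn⟩).2
  exact ⟨j + 1, by simp only [zonotopeCenter, hj]; push_cast; ring⟩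

theorem gap_of_loneliness_interpretation_general
    {d : ℕ} (n : Fin d → ℤ) (hgcd : Finset.univ.gcd n = 1)
    (γ : ℝ) (hγ0 : 0 < γ) (hγ : γ ≤ 1/2)
    (Z : Set (Fin d → ℝ))
    (hZ : Z = (Set.range fun t : ℝ => t • (fun i => (n i : ℝ))) + Set.Icc (0 : Fin d → ℝ) 1)
    (c : Fin d → ℝ) (hc : c = fun i => (1 + (n i : ℝ)) / 2) :
    (∃ β : ℝ, ∀ i, γ ≤ distToInt (β * (n i : ℝ))) ↔
      (∃ w : Fin d → ℝ, w ∈ interior Z ∧ IsLatticePoint w ∧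
        w ∈ ({c} : Set (Fin d → ℝ)) + (1 - 2 * γ) • (Z - {c})) := by
  subst hZ hc
  constructor
  · rintro ⟨β, hβ⟩
    obtain ⟨w, hw, hslab⟩ := (forall_le_distToInt_iff γ _).1 hβ
    rcases hγ.lt_or_eq with hlt | rfl
    · have hint : ∀ i, w i - β * n i ∈ Ioo 0 1 :=
        fun i => Icc_subset_Ioo hγ0 (by linarith) (hslab i)
      exact ⟨w, mem_interior_zonotope β hint, hw, mem_shrunkZonotope_of_sub_mul_mem_Icc hlt hslab⟩
    · have hhalf : ∀ i, w i - β * n i = 1 / 2 :=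
        fun i => le_antisymm ((hslab i).2.trans_eq (by norm_num)) (hslab i).1
      exact ⟨_, zonotopeCenter_mem_interior _, isLatticePoint_zonotopeCenter hgcd hw hhalf,
        zonotopeCenter_mem_shrunkZonotope _ _⟩
  · rintro ⟨w, -, hw, hmem⟩
    obtain ⟨s, hs⟩ := exists_sub_mul_mem_Icc_of_mem_shrunkZonotope hγ hmem
    exact ⟨s, (forall_le_distToInt_iff γ _).2 ⟨w, hw, hs⟩⟩

theorem gap_of_loneliness_interpretation
    {d : ℕ} (hd : 2 ≤ d) (n : Fin d → ℤ) (hpos : ∀ i, 0 < n i)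
    (hdist : Function.Injective n) (hgcd : Finset.univ.gcd n = 1)
    (γ : ℝ) (hγ0 : 0 < γ) (hγ : γ ≤ 1/2)
    (Z : Set (Fin d → ℝ))
    (hZ : Z = (Set.range fun t : ℝ => t • (fun i => (n i : ℝ))) + Set.Icc (0 : Fin d → ℝ) 1)
    (c : Fin d → ℝ) (hc : c = fun i => (1 + (n i : ℝ)) / 2) :
    (∃ β : ℝ, ∀ i, γ ≤ distToInt (β * (n i : ℝ))) ↔
      (∃ w : Fin d → ℝ, w ∈ interior Z ∧ IsLatticePoint w ∧
        w ∈ ({c} : Set (Fin d → ℝ)) + (1 - 2 * γ) • (Z - {c})) :=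
  gap_of_loneliness_interpretation_general n hgcd γ hγ0 hγ Z hZ c hc
end

section
/- Let z ∈ ℕ have prime factorization z = p_1^{c_1} ··· p_h^{c_h} with p_1 < ... < p_h and c_i ≥ 1, let k = φ(z)/2, and let a_1 < a_2 < ... < a_k be the elements of Φ(z) := {a ∈ ℤ : 1 ≤ a ≤ z/2, gcd(a,z) = 1} in increasing order. Define α^z ∈ (ℚ \ ℤ)^{k + h(z)} by α^z_i = a_i/z for 1 ≤ i ≤ k and α^z_{k+j} = 1/p_j for 1 ≤ j ≤ h(z), where h(z) = 0 if z is prime and h(z) = h otherwise. Then ψ(α^z) = 1/z. -/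
open Pointwise

/-- `h(z)` is `0` if `z` is prime, and otherwise the number of distinct prime divisors. -/
def hComposite (z : ℕ) : ℕ := if z.Prime then 0 else z.primeFactors.card

/-!
Taking `Q = 1` gives `ψ(α^z) ≥ 1/z`, since every `a_i ≤ z/2` and every `p_j ≤ z`. Conversely, let
`Q ∈ ℤ`. If `Q` is coprime to `z`, then `Q⁻¹` or `-Q⁻¹` modulo `z` is represented by some
`a_i ∈ [1, z/2]`, and `Q a_i ≡ ±1 (mod z)` gives `‖Q a_i / z‖ = 1/z`. Otherwise a prime `q ∣ z`
divides `Q`, and `Q/q ∈ ℤ`; here `1/q` is a coordinate of `α^z`: it is `1/p_j` when `z` is composite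
and `a_1/z = 1/z` when `z = q` is prime.
-/

lemma distToInt_le (x : ℝ) (n : ℤ) : distToInt x ≤ |x - n| := round_le x n

lemma distToInt_intCast (n : ℤ) : distToInt n = 0 := by
  simp [distToInt]

lemma distToInt_add_intCast (x : ℝ) (n : ℤ) : distToInt (x + n) = distToInt x := by
  simp only [distToInt, round_add_intCast, Int.cast_add, add_sub_add_right_eq_sub]

lemma distToInt_neg (x : ℝ) : distToInt (-x) = distToInt x := by
  have h₁ := distToInt_le (-x) (-round x)
  have h₂ := distToInt_le x (-round (-x))
  rw [Int.cast_neg, sub_neg_eq_add, ← abs_neg, neg_add', neg_neg] at h₁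
  rw [Int.cast_neg, sub_neg_eq_add, ← abs_neg, neg_add'] at h₂
  exact le_antisymm h₁ h₂

lemma distToInt_eq_self {x : ℝ} (h₀ : 0 ≤ x) (h₁ : 2 * x ≤ 1) : distToInt x = x := by
  rw [distToInt, abs_sub_round_eq_min, Int.fract_eq_self.mpr ⟨h₀, by linarith⟩]
  exact min_eq_left (by linarith)

lemma distToInt_natCast_div {b n : ℕ} (h : 2 * b ≤ n) : distToInt (b / n) = b / n := by
  refine distToInt_eq_self (by positivity) ?_
  rw [← mul_div_assoc]
  exact div_le_one_of_le₀ (by exact_mod_cast h) (by positivity)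

lemma one_div_le_distToInt_natCast_div {b n : ℕ} (h₁ : 1 ≤ b) (h₂ : 2 * b ≤ n) :
    1 / n ≤ distToInt (b / n) := by
  rw [distToInt_natCast_div h₂]
  exact div_le_div_of_nonneg_right (by exact_mod_cast h₁) (by positivity)

lemma one_div_le_distToInt_one_div {m n : ℕ} (hm : 2 ≤ m) (hmn : m ≤ n) :
    1 / n ≤ distToInt (1 / m) := by
  rw [show distToInt (1 / m) = 1 / m by simpa using distToInt_natCast_div (b := 1) hm]
  exact one_div_le_one_div_of_le (by positivity) (by exact_mod_cast hmn)

lemma distToInt_intCast_div_congr {z : ℕ} {m n : ℤ} (h : m ≡ n [ZMOD z]) :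
    distToInt (m / z) = distToInt (n / z) := by
  obtain ⟨t, ht⟩ := h.dvd
  rcases eq_or_ne z 0 with rfl | hz
  · simp_all
  · have : (n : ℝ) / z = m / z + t := by
      rw [show (n : ℝ) = m + z * t by exact_mod_cast eq_add_of_sub_eq' ht]
      field_simp
    rw [this, distToInt_add_intCast]

lemma distToInt_intCast_div_of_modEq_one_or_neg_one {z : ℕ} (hz : 2 ≤ z) {n : ℤ}
    (h : n ≡ 1 [ZMOD z] ∨ n ≡ -1 [ZMOD z]) : distToInt (n / z) = 1 / z := by
  have hone : distToInt (1 / z) = 1 / z := by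
    simpa using distToInt_natCast_div (b := 1) hz
  rcases h with h | h
  · rw [distToInt_intCast_div_congr h, Int.cast_one, hone]
  · rw [distToInt_intCast_div_congr h, Int.cast_neg, neg_div, distToInt_neg]
    simpa using hone

lemma distToInt_intCast_mul_one_div_of_dvd {q : ℕ} {Q : ℤ} (h : (q : ℤ) ∣ Q) :
    distToInt (Q * (1 / q)) = 0 := by
  obtain ⟨t, rfl⟩ := h
  rcases eq_or_ne q 0 with rfl | hq
  · simp [distToInt]
  · have : ((q * t : ℤ) : ℝ) * (1 / q) = t := by
      push_cast
      field_simp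
    rw [this, distToInt_intCast]

lemma iSup_iInf_distToInt_mul_eq {ι : Type*} [Nonempty ι] (α : ι → ℝ) (c : ℝ)
    (hle : ∀ Q : ℤ, ∃ i, distToInt (Q * α i) ≤ c) (hge : ∀ i, c ≤ distToInt (α i)) :
    (⨆ Q : ℤ, ⨅ i, distToInt ((Q : ℝ) * α i)) = c := by
  have hbdd (Q : ℤ) : BddBelow (Set.range fun i ↦ distToInt (Q * α i)) :=
    ⟨0, by rintro _ ⟨i, rfl⟩; exact abs_nonneg _⟩
  have hbound (Q : ℤ) : ⨅ i, distToInt (Q * α i) ≤ c :=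
    let ⟨i, hi⟩ := hle Q
    ciInf_le_of_le (hbdd Q) i hi
  refine le_antisymm (ciSup_le hbound) ?_
  refine le_ciSup_of_le ⟨c, by rintro _ ⟨Q, rfl⟩; exact hbound Q⟩ 1 (le_ciInf fun i ↦ ?_)
  simpa using hge i

lemma Int.isCoprime_or_exists_prime_dvd (Q : ℤ) (z : ℕ) :
    IsCoprime Q z ∨ ∃ q : ℕ, q.Prime ∧ q ∣ z ∧ (q : ℤ) ∣ Q := by
  by_cases h : Q.natAbs.Coprime z
  · exact .inl (Int.isCoprime_iff_gcd_eq_one.mpr h)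
  · obtain ⟨q, hq, hqQ, hqz⟩ := Nat.Prime.not_coprime_iff_dvd.mp h
    exact .inr ⟨q, hq, hqz, Int.natCast_dvd.mpr hqQ⟩

lemma ZMod.exists_natCast_eq_or_eq_neg_of_isUnit {z : ℕ} (hz : 2 ≤ z) {x : ZMod z}
    (hx : IsUnit x) :
    ∃ b : ℕ, 1 ≤ b ∧ 2 * b ≤ z ∧ b.Coprime z ∧ ((b : ZMod z) = x ∨ (b : ZMod z) = -x) := by
  have : NeZero z := ⟨by omega⟩
  have hcop : x.val.Coprime z := by simpa using ZMod.val_coe_unit_coprime hx.unit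
  have hval : x.val ≠ 0 := by
    rintro h
    rw [h, Nat.coprime_zero_left] at hcop
    omega
  have hlt := x.val_lt
  by_cases hhalf : 2 * x.val ≤ z
  · exact ⟨x.val, by omega, hhalf, hcop, .inl (ZMod.natCast_zmod_val x)⟩
  · refine ⟨z - x.val, by omega, by omega, (Nat.coprime_self_sub_left hlt.le).mpr hcop, .inr ?_⟩
    rw [Nat.cast_sub hlt.le, ZMod.natCast_self, ZMod.natCast_zmod_val, zero_sub]

lemma exists_mul_modEq_one_or_neg_one {z : ℕ} (hz : 2 ≤ z) {Q : ℤ} (hQ : IsCoprime Q z) :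
    ∃ b : ℕ, 1 ≤ b ∧ 2 * b ≤ z ∧ b.Coprime z ∧ (Q * b ≡ 1 [ZMOD z] ∨ Q * b ≡ -1 [ZMOD z]) := by
  obtain ⟨u, v, huv⟩ := hQ
  have hinv : (Q : ZMod z) * u = 1 := by
    have := congrArg (Int.cast : ℤ → ZMod z) huv
    push_cast [ZMod.natCast_self] at this
    linear_combination this
  obtain ⟨b, hb₁, hb₂, hbz, hb⟩ :=
    ZMod.exists_natCast_eq_or_eq_neg_of_isUnit hz (IsUnit.of_mul_eq_one_right _ hinv)
  refine ⟨b, hb₁, hb₂, hbz, ?_⟩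
  simp only [← ZMod.intCast_eq_intCast_iff, Int.cast_mul, Int.cast_natCast, Int.cast_neg,
    Int.cast_one]
  rcases hb with hb | hb <;> rw [hb]
  · exact .inl hinv
  · exact .inr (by rw [mul_neg, hinv])

theorem psi_of_extremal_vector_general (z : ℕ) (hz : 3 ≤ z)
    (k : ℕ)
    (h : ℕ)
    (a : Fin k → ℕ)
    (haran : ∀ b : ℕ, (∃ i, a i = b) ↔ 1 ≤ b ∧ 2 * b ≤ z ∧ Nat.gcd b z = 1)
    (p : Fin h → ℕ)
    (hpran : ∀ q : ℕ, (∃ j, p j = q) ↔ q ∈ z.primeFactors)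
    (α : Fin (k + h) → ℝ)
    (hα1 : ∀ i : Fin k, α (Fin.castAdd h i) = (a i : ℝ) / (z : ℝ))
    (hα2 : ∀ j : Fin h, α (Fin.natAdd k j) = 1 / (p j : ℝ)) :
    (⨆ Q : ℤ, ⨅ i, distToInt ((Q : ℝ) * α i)) = 1 / (z : ℝ) := by
  have hz₂ : 2 ≤ z := by omega
  obtain ⟨i₁, hi₁⟩ := (haran 1).mpr ⟨le_rfl, by omega, Nat.gcd_one_left z⟩
  have hα_coprime (b : ℕ) (h₁ : 1 ≤ b) (h₂ : 2 * b ≤ z) (hbz : b.Coprime z) :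
      ∃ i, α i = b / z :=
    let ⟨i, hi⟩ := (haran b).mpr ⟨h₁, h₂, hbz⟩
    ⟨Fin.castAdd h i, by rw [hα1, hi]⟩
  have hα_prime (q : ℕ) (hq : q.Prime) (hqz : q ∣ z) : ∃ i, α i = 1 / q := by
    by_cases hzp : z.Prime
    · refine ⟨Fin.castAdd h i₁, ?_⟩
      rw [hα1, hi₁, (Nat.prime_dvd_prime_iff_eq hq hzp).mp hqz, Nat.cast_one]
    · obtain ⟨j, hj⟩ := (hpran q).mpr (Nat.mem_primeFactors.mpr ⟨hq, hqz, by omega⟩)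
      exact ⟨Fin.natAdd k j, by rw [hα2, hj]⟩
  have : Nonempty (Fin (k + h)) := ⟨Fin.castAdd h i₁⟩
  refine iSup_iInf_distToInt_mul_eq α _ (fun Q ↦ ?_) (Fin.addCases (fun i ↦ ?_) (fun j ↦ ?_))
  · rcases Int.isCoprime_or_exists_prime_dvd Q z with hQ | ⟨q, hq, hqz, hqQ⟩
    · obtain ⟨b, hb₁, hb₂, hbz, hQb⟩ := exists_mul_modEq_one_or_neg_one hz₂ hQ
      obtain ⟨i, hi⟩ := hα_coprime b hb₁ hb₂ hbz
      refine ⟨i, le_of_eq ?_⟩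
      rw [hi, ← distToInt_intCast_div_of_modEq_one_or_neg_one hz₂ hQb]
      push_cast
      rw [mul_div_assoc]
    · obtain ⟨i, hi⟩ := hα_prime q hq hqz
      exact ⟨i, by rw [hi, distToInt_intCast_mul_one_div_of_dvd hqQ]; positivity⟩
  · obtain ⟨h₁, h₂, -⟩ := (haran (a i)).mp ⟨i, rfl⟩
    simpa [hα1] using one_div_le_distToInt_natCast_div h₁ h₂
  · obtain ⟨hq, hqz, -⟩ := Nat.mem_primeFactors.mp ((hpran (p j)).mp ⟨j, rfl⟩)
    simpa [hα2] using one_div_le_distToInt_one_div hq.two_le (Nat.le_of_dvd (by omega) hqz)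

theorem psi_of_extremal_vector (z : ℕ) (hz : 3 ≤ z)
    (k : ℕ) (hk : 2 * k = z.totient)
    (h : ℕ) (hh : h = hComposite z)
    (a : Fin k → ℕ) (ha : StrictMono a)
    (haran : ∀ b : ℕ, (∃ i, a i = b) ↔ 1 ≤ b ∧ 2 * b ≤ z ∧ Nat.gcd b z = 1)
    (p : Fin h → ℕ) (hp : StrictMono p)
    (hpran : ∀ q : ℕ, (∃ j, p j = q) ↔ q ∈ z.primeFactors)
    (α : Fin (k + h) → ℝ)
    (hα1 : ∀ i : Fin k, α (Fin.castAdd h i) = (a i : ℝ) / (z : ℝ))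
    (hα2 : ∀ j : Fin h, α (Fin.natAdd k j) = 1 / (p j : ℝ)) :
    (⨆ Q : ℤ, ⨅ i, distToInt ((Q : ℝ) * α i)) = 1 / (z : ℝ) :=
  psi_of_extremal_vector_general z hz k h a haran p hpran α hα1 hα2
end

section
/- For an integer z ≥ 3, write k = φ(z)/2 and d(z) = k + h(z), let α^z be the vector with entries α^z_i = a_i/z for 1 ≤ i ≤ k (where a_1 < ... < a_k are the elements of {a ∈ ℤ : 1 ≤ a ≤ z/2, gcd(a,z)=1}) and α^z_{k+j} = 1/p_j for the distinct prime divisors p_1 < ... < p_{h(z)} of z when z is composite, and let P^z := [0, v^z] + [0, e_2] + ... + [0, e_{d(z)}] ⊆ ℝ^{d(z)} be the lattice parallelepiped with first generator v^z := (z, z·α^z_2, ..., z·α^z_{d(z)})^T ∈ ℤ^{d(z)}. Then P^z has exactly φ(z) interior lattice points, and every interior lattice point w ∈ int(P^z) ∩ ℤ^{d(z)} satisfies ca(P^z, w) = z − 1. -/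
open Pointwise

/-!
The shear `t ↦ t i₀ • v + (t with t i₀ := 0)` maps the unit cube onto `P^z`. In these coordinates
an interior lattice point is determined by `b = z t_{i₀} ∈ (0, z)`: the other coordinates are forced
to be `t_i = 1 - (b v_i mod z)/z`, which lie in `(0, 1)` iff `z ∤ b v_i`. Since `v` contains every
`z/p`, this holds for all `i` iff `b` is coprime to `z`, which gives `φ(z)` points.
The coefficient of asymmetry is invariant under linear isomorphisms, and that of the cube at a point
with coordinates in `[1/z, 1 - 1/z]` is `z - 1` as soon as one coordinate is `1/z` or `1 - 1/z`.
Such a coordinate exists because `±b⁻¹ mod z` has a representative `a ≤ z/2`: either `a = 1`, so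
`b ≡ ±1`, or `a` is an entry of `v` and `b a ≡ ±1 (mod z)`.
-/

open Set

theorem ca_image_of_injective {E F : Type*} [AddCommGroup E] [Module ℝ E] [AddCommGroup F]
    [Module ℝ F] (L : E →ₗ[ℝ] F) (hL : Function.Injective L) (K : Set E) (w : E) :
    ca (L '' K) (L w) = ca K w := by
  unfold ca
  congr! 3 with l
  rw [← image_singleton, ← image_sub, ← image_sub, ← image_smul_set,
    image_subset_image_iff hL]

theorem singleton_sub_Icc_subset_smul_iff {ι : Type*} (t : ι → ℝ) {l : ℝ} (hl : 0 < l) :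
    ({t} : Set (ι → ℝ)) - Icc 0 1 ⊆ l • (Icc 0 1 - {t}) ↔
      ∀ i, t i ≤ l * (1 - t i) ∧ 1 - t i ≤ l * t i := by
  simp only [singleton_sub, sub_singleton, ← image_smul, image_image, image_subset_iff]
  constructor
  · intro hsub i
    obtain ⟨y, hy, e⟩ := hsub (left_mem_Icc.mpr zero_le_one)
    obtain ⟨y', hy', e'⟩ := hsub (right_mem_Icc.mpr zero_le_one)
    have e : l * (y i - t i) = t i := by simpa using congrFun e i
    have e' : l * (y' i - t i) = t i - 1 := by simpa using congrFun e' i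
    have hy1 : y i ≤ 1 := hy.2 i
    have hy0 : 0 ≤ y' i := hy'.1 i
    constructor <;> nlinarith
  · intro ht y hy
    refine ⟨t + l⁻¹ • (t - y), ⟨fun i => ?_, fun i => ?_⟩, by simp [smul_inv_smul₀ hl.ne']⟩ <;>
    · have hy0 : 0 ≤ y i := hy.1 i
      have hy1 : y i ≤ 1 := hy.2 i
      have hl' := inv_pos.mpr hl
      have hll' : l * l⁻¹ = 1 := mul_inv_cancel₀ hl.ne'
      simp only [Pi.add_apply, Pi.smul_apply, Pi.sub_apply, Pi.zero_apply, Pi.one_apply,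
        smul_eq_mul]
      nlinarith [ht i, mul_le_mul_of_nonneg_left hy1 hl'.le, mul_le_mul_of_nonneg_left hy0 hl'.le]

theorem ca_Icc_eq {ι : Type*} (m : ℝ) (t : ι → ℝ) (ht : ∀ i, 1 ≤ m * t i ∧ m * t i ≤ m - 1)
    (hext : ∃ i, m * t i = 1 ∨ m * t i = m - 1) : ca (Icc 0 1) t = m - 1 := by
  obtain ⟨i₀, hi₀⟩ := hext
  have hm : 1 ≤ m - 1 := (ht i₀).1.trans (ht i₀).2
  refine IsLeast.csInf_eq ⟨⟨hm, ?_⟩, fun l ⟨hl, hsub⟩ => ?_⟩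
  · refine (singleton_sub_Icc_subset_smul_iff t (by linarith)).mpr fun i => ?_
    have := ht i
    constructor <;> nlinarith
  · obtain ⟨h₁, h₂⟩ := (singleton_sub_Icc_subset_smul_iff t (by linarith)).mp hsub i₀
    rcases hi₀ with h | h <;> nlinarith

section Shear

variable {ι : Type*} [Fintype ι]

theorem interior_image_Icc {L : (ι → ℝ) →ₗ[ℝ] (ι → ℝ)} (hL : Function.Injective L) :
    interior (L '' Icc 0 1) = L '' pi univ fun _ => Ioo 0 1 := by
  let e := (LinearEquiv.ofBijective L
    ⟨hL, LinearMap.injective_iff_surjective.mp hL⟩).toContinuousLinearEquiv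
  have he : ⇑L = e.toHomeomorph := rfl
  rw [he, ← e.toHomeomorph.image_interior, ← pi_univ_Icc, interior_pi_set finite_univ]
  simp [interior_Icc]

variable [DecidableEq ι]

noncomputable def shear (i₀ : ι) (v : ι → ℝ) : (ι → ℝ) →ₗ[ℝ] (ι → ℝ) :=
  Fintype.linearCombination ℝ (Function.update (fun j => Pi.single j 1) i₀ v)

theorem shear_apply (i₀ : ι) (v t : ι → ℝ) :
    shear i₀ v t = t i₀ • v + Function.update t i₀ 0 := by
  ext i
  simp only [shear, Fintype.linearCombination_apply, Finset.sum_apply, Pi.smul_apply]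
  rw [Fintype.sum_eq_add_sum_compl i₀]
  simp only [Function.update_apply, smul_eq_mul, Pi.add_apply, Pi.smul_apply]
  rw [Finset.sum_congr rfl fun x hx => by rw [if_neg (by simpa using hx)]]
  simp [Pi.single_apply]

theorem shear_apply_self (i₀ : ι) (v t : ι → ℝ) : shear i₀ v t i₀ = t i₀ * v i₀ := by
  simp [shear_apply]

theorem shear_apply_of_ne {i₀ i : ι} (v t : ι → ℝ) (hi : i ≠ i₀) :
    shear i₀ v t i = t i₀ * v i + t i := by
  simp [shear_apply, hi]

theorem shear_injective {i₀ : ι} {v : ι → ℝ} (hv : v i₀ ≠ 0) :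
    Function.Injective (shear i₀ v) := by
  rw [← LinearMap.ker_eq_bot, LinearMap.ker_eq_bot']
  intro t ht
  have h₀ : t i₀ = 0 := by simpa [shear_apply_self, hv] using congrFun ht i₀
  ext i
  by_cases hi : i = i₀
  · rw [hi, h₀, Pi.zero_apply]
  · simpa [shear_apply_of_ne _ _ hi, h₀] using congrFun ht i

end Shear

theorem Nat.dvd_mul_div_iff_dvd {p z : ℕ} (b : ℕ) (hpz : p ∣ z) (hz : z ≠ 0) :
    z ∣ b * (z / p) ↔ p ∣ b := by
  obtain ⟨q, rfl⟩ := hpz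
  rw [Nat.mul_div_cancel_left q (Nat.pos_of_ne_zero (left_ne_zero_of_mul hz)),
    Nat.mul_dvd_mul_iff_right (Nat.pos_of_ne_zero (right_ne_zero_of_mul hz))]

section Coprime

variable {ι : Type*} {i₀ : ι} {z : ℕ} {v : ι → ℕ}

theorem forall_not_dvd_mul_iff_coprime {b : ℕ} (hb : 0 < b) (hbz : b < z)
    (hv : ∀ i ≠ i₀, (v i).Coprime z ∨ ∃ p ∈ z.primeFactors, v i = z / p)
    (hcover : ∀ p ∈ z.primeFactors, p ≠ z → ∃ i ≠ i₀, v i = z / p) :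
    (∀ i ≠ i₀, ¬ z ∣ b * v i) ↔ b.Coprime z := by
  constructor
  · intro hnd
    refine Nat.coprime_of_dvd fun p hp hpb hpz => ?_
    have hpf : p ∈ z.primeFactors := Nat.mem_primeFactors.mpr ⟨hp, hpz, by omega⟩
    rcases eq_or_ne p z with rfl | hpz'
    · exact absurd (Nat.le_of_dvd hb hpb) (by omega)
    · obtain ⟨i, hi, hvi⟩ := hcover p hpf hpz'
      exact hnd i hi (hvi ▸ (Nat.dvd_mul_div_iff_dvd b hpz (by omega)).mpr hpb)
  · intro hcop i hi hdvd
    rcases hv i hi with hvi | ⟨p, hpf, hvi⟩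
    · exact absurd (Nat.le_of_dvd hb (hvi.symm.dvd_of_dvd_mul_right hdvd)) (by omega)
    · obtain ⟨hp, hpz, -⟩ := Nat.mem_primeFactors.mp hpf
      rw [hvi, Nat.dvd_mul_div_iff_dvd b hpz (by omega)] at hdvd
      exact hp.one_lt.ne' (Nat.eq_one_of_dvd_coprimes hcop hdvd hpz)

theorem ncard_setOf_forall_not_dvd_mul (hz : 2 ≤ z)
    (hv : ∀ i ≠ i₀, (v i).Coprime z ∨ ∃ p ∈ z.primeFactors, v i = z / p)
    (hcover : ∀ p ∈ z.primeFactors, p ≠ z → ∃ i ≠ i₀, v i = z / p) :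
    {b | 0 < b ∧ b < z ∧ ∀ i ≠ i₀, ¬ z ∣ b * v i}.ncard = z.totient := by
  rw [Nat.totient_eq_card_coprime, ← ncard_coe_finset]
  congr 1
  ext b
  simp only [mem_ofPred_eq, Finset.coe_filter, Finset.mem_range]
  constructor
  · rintro ⟨hb, hbz, hnd⟩
    exact ⟨hbz, ((forall_not_dvd_mul_iff_coprime hb hbz hv hcover).mp hnd).symm⟩
  · rintro ⟨hbz, hcop⟩
    have hb : 0 < b := Nat.pos_of_ne_zero fun h0 => by
      rw [h0, Nat.coprime_zero_right] at hcop
      omega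
    exact ⟨hb, hbz, (forall_not_dvd_mul_iff_coprime hb hbz hv hcover).mpr hcop.symm⟩

end Coprime

theorem exists_mul_mod_eq_one_or_sub_one {z b : ℕ} (hz : 2 ≤ z) (hb : b.Coprime z) :
    ∃ a, 0 < a ∧ 2 * a ≤ z ∧ a.Coprime z ∧ (b * a % z = 1 ∨ b * a % z = z - 1) := by
  obtain ⟨c, hcz, hc⟩ := Nat.exists_mul_mod_eq_one_of_coprime hb (by omega)
  have hcop : c.Coprime z :=
    Nat.coprime_of_mul_modEq_one b (by rw [mul_comm]; exact hc.trans (Nat.mod_eq_of_lt hz).symm)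
  have hc0 : 0 < c := Nat.pos_of_ne_zero fun h => by simp [h] at hc
  by_cases hcz2 : 2 * c ≤ z
  · exact ⟨c, hc0, hcz2, hcop, Or.inl hc⟩
  refine ⟨z - c, by omega, by omega, (Nat.coprime_self_sub_left hcz.le).mpr hcop, Or.inr ?_⟩
  have hsum : (b * (z - c) + 1) % z = 0 := by
    calc (b * (z - c) + 1) % z = (b * (z - c) + b * c % z) % z := by rw [hc]
      _ = b * z % z := by rw [Nat.add_mod_mod, ← mul_add, Nat.sub_add_cancel hcz.le]
      _ = 0 := Nat.mul_mod_left b z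
  have hdvd : z ∣ b * (z - c) % z + 1 := by
    rw [Nat.dvd_iff_mod_eq_zero, Nat.mod_add_mod, hsum]
  have := Nat.le_of_dvd (by omega) hdvd
  have := Nat.mod_lt (b * (z - c)) (by omega : 0 < z)
  omega

theorem exists_int_eq_div_add_iff {z : ℕ} (hz : 0 < z) (N : ℕ) {s : ℝ} (hs : s ∈ Ioo 0 1) :
    (∃ m : ℤ, (N : ℝ) / z + s = m) ↔ ¬ z ∣ N ∧ s = ((z - N % z : ℕ) : ℝ) / z := by
  have hzR : (0 : ℝ) < z := Nat.cast_pos.mpr hz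
  have hr : N % z < z := Nat.mod_lt N hz
  have hdiv : (N : ℝ) / z = (N / z : ℕ) + (N % z : ℕ) / z := by
    rw [div_eq_iff hzR.ne', add_mul, div_mul_cancel₀ _ hzR.ne']
    exact_mod_cast (Nat.div_add_mod' N z).symm
  rw [Nat.dvd_iff_mod_eq_zero, hdiv, Nat.cast_sub hr.le, sub_div, div_self hzR.ne']
  generalize N / z = q, N % z = r at *
  have hr0 : (0 : ℝ) ≤ r / z := by positivity
  have hr1 : (r : ℝ) / z < 1 := (div_lt_one hzR).mpr (by exact_mod_cast hr)
  constructor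
  · rintro ⟨m, hm⟩
    obtain rfl : m = q + 1 := by
      have hlo : (0 : ℝ) < ((m - q : ℤ) : ℝ) := by push_cast; linarith [hs.1]
      have hhi : ((m - q : ℤ) : ℝ) < 2 := by push_cast; linarith [hs.2]
      have := Int.cast_pos.mp hlo
      have : m - q < 2 := by exact_mod_cast hhi
      omega
    push_cast at hm
    have hs' : s = 1 - r / z := by linarith
    refine ⟨fun h0 => ?_, hs'⟩
    rw [h0, Nat.cast_zero, zero_div, sub_zero] at hs'
    exact hs.2.ne hs'
  · rintro ⟨-, rfl⟩
    exact ⟨q + 1, by push_cast; ring⟩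

section Lattice

variable {d : ℕ} {i₀ : Fin d} {z : ℕ} {v : Fin d → ℕ}

/-- Shear coordinates of the interior lattice point of `P^z` whose `i₀`-th coordinate is `b`. -/
noncomputable def latticeCoords (z : ℕ) (v : Fin d → ℕ) (i₀ : Fin d) (b : ℕ) : Fin d → ℝ :=
  fun i => ((if i = i₀ then b else z - b * v i % z : ℕ) : ℝ) / z

theorem latticeCoords_self (b : ℕ) : latticeCoords z v i₀ b i₀ = b / z := by
  simp [latticeCoords]

theorem latticeCoords_injective (hz : 0 < z) : Function.Injective (latticeCoords z v i₀) :=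
  fun b b' h => by simpa [latticeCoords_self, hz.ne'] using congrFun h i₀

theorem latticeCoords_of_ne {i : Fin d} (b : ℕ) (hi : i ≠ i₀) :
    latticeCoords z v i₀ b i = ((z - b * v i % z : ℕ) : ℝ) / z := by
  simp [latticeCoords, hi]

theorem latticeCoords_mem_pi_Ioo (hz : 0 < z) {b : ℕ} (hb0 : 0 < b) (hbz : b < z)
    (hnd : ∀ i ≠ i₀, ¬ z ∣ b * v i) : latticeCoords z v i₀ b ∈ pi univ fun _ => Ioo 0 1 := by
  have hzR : (0 : ℝ) < z := Nat.cast_pos.mpr hz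
  intro i _
  by_cases hi : i = i₀
  · rw [hi, latticeCoords_self]
    exact ⟨by positivity, (div_lt_one hzR).mpr (by exact_mod_cast hbz)⟩
  · have hr0 : 0 < b * v i % z := Nat.pos_of_ne_zero fun h => hnd i hi (Nat.dvd_of_mod_eq_zero h)
    have hrz : b * v i % z < z := Nat.mod_lt _ hz
    have hn0 : 0 < z - b * v i % z := by omega
    have hnz : z - b * v i % z < z := by omega
    rw [latticeCoords_of_ne b hi]
    exact ⟨by positivity, (div_lt_one hzR).mpr (by exact_mod_cast hnz)⟩

theorem isLatticePoint_shear_latticeCoords (hz : 0 < z) (hv : v i₀ = z) {b : ℕ} (hb0 : 0 < b)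
    (hbz : b < z) (hnd : ∀ i ≠ i₀, ¬ z ∣ b * v i) :
    IsLatticePoint (shear i₀ (fun i => (v i : ℝ)) (latticeCoords z v i₀ b)) := by
  intro i
  by_cases hi : i = i₀
  · refine ⟨b, ?_⟩
    rw [hi, shear_apply_self, latticeCoords_self, hv, div_mul_cancel₀ _ (by positivity),
      Int.cast_natCast]
  · obtain ⟨m, hm⟩ := (exists_int_eq_div_add_iff hz (b * v i)
      (latticeCoords_mem_pi_Ioo hz hb0 hbz hnd i (mem_univ _))).mpr
        ⟨hnd i hi, latticeCoords_of_ne b hi⟩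
    refine ⟨m, ?_⟩
    rw [shear_apply_of_ne _ _ hi, ← hm, latticeCoords_self, Nat.cast_mul]
    ring

theorem exists_eq_latticeCoords_of_isLatticePoint (hz : 0 < z) (hv : v i₀ = z) {t : Fin d → ℝ}
    (ht : t ∈ pi univ fun _ => Ioo 0 1)
    (hlat : IsLatticePoint (shear i₀ (fun i => (v i : ℝ)) t)) :
    ∃ b, (0 < b ∧ b < z ∧ ∀ i ≠ i₀, ¬ z ∣ b * v i) ∧ latticeCoords z v i₀ b = t := by
  have hzR : (0 : ℝ) < z := Nat.cast_pos.mpr hz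
  obtain ⟨b, hb⟩ := hlat i₀
  rw [shear_apply_self, hv] at hb
  have hb0 : 0 < b := by
    have : (0 : ℝ) < b := hb ▸ mul_pos (ht i₀ (mem_univ _)).1 hzR
    exact_mod_cast this
  have hbz : b < z := by
    have : (b : ℝ) < z := hb ▸ mul_lt_of_lt_one_left hzR (ht i₀ (mem_univ _)).2
    exact_mod_cast this
  lift b to ℕ using hb0.le
  have ht₀ : t i₀ = b / z := by rw [eq_div_iff hzR.ne', hb, Int.cast_natCast]
  have hcoord {i} (hi : i ≠ i₀) :=
    (exists_int_eq_div_add_iff hz (b * v i) (ht i (mem_univ _))).mp <| by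
      obtain ⟨m, hm⟩ := hlat i
      refine ⟨m, ?_⟩
      rw [← hm, shear_apply_of_ne _ _ hi, ht₀, Nat.cast_mul]
      ring
  refine ⟨b, ⟨by exact_mod_cast hb0, by exact_mod_cast hbz, fun i hi => (hcoord hi).1⟩,
    funext fun i => ?_⟩
  by_cases hi : i = i₀
  · rw [hi, latticeCoords_self, ht₀]
  · rw [latticeCoords_of_ne b hi, (hcoord hi).2]

theorem setOf_isLatticePoint_shear (hz : 0 < z) (hv : v i₀ = z) :
    {t | t ∈ pi univ (fun _ => Ioo 0 1) ∧ IsLatticePoint (shear i₀ (fun i => (v i : ℝ)) t)} =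
      latticeCoords z v i₀ '' {b | 0 < b ∧ b < z ∧ ∀ i ≠ i₀, ¬ z ∣ b * v i} := by
  ext t
  constructor
  · exact fun ⟨ht, hlat⟩ => exists_eq_latticeCoords_of_isLatticePoint hz hv ht hlat
  · rintro ⟨b, ⟨hb0, hbz, hnd⟩, rfl⟩
    exact ⟨latticeCoords_mem_pi_Ioo hz hb0 hbz hnd,
      isLatticePoint_shear_latticeCoords hz hv hb0 hbz hnd⟩

theorem setOf_mem_interior_isLatticePoint (hz : 0 < z) (hv : v i₀ = z) :
    {x | x ∈ interior (shear i₀ (fun i => (v i : ℝ)) '' Icc 0 1) ∧ IsLatticePoint x} =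
      shear i₀ (fun i => (v i : ℝ)) ''
        (latticeCoords z v i₀ '' {b | 0 < b ∧ b < z ∧ ∀ i ≠ i₀, ¬ z ∣ b * v i}) := by
  rw [interior_image_Icc (shear_injective (by simpa [hv] using hz.ne')),
    ← setOf_isLatticePoint_shear hz hv]
  exact (image_inter_preimage _ _ _).symm

theorem ca_Icc_latticeCoords (hz : 2 ≤ z)
    (hcover : ∀ a, 2 ≤ a → 2 * a ≤ z → a.Coprime z → ∃ i ≠ i₀, v i = a) {b : ℕ} (hb0 : 0 < b)
    (hbz : b < z) (hnd : ∀ i ≠ i₀, ¬ z ∣ b * v i) (hcop : b.Coprime z) :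
    ca (Icc 0 1) (latticeCoords z v i₀ b) = z - 1 := by
  have hzR : (z : ℝ) ≠ 0 := by positivity
  have hzt (i) : (z : ℝ) * latticeCoords z v i₀ b i =
      ((if i = i₀ then b else z - b * v i % z : ℕ) : ℝ) := mul_div_cancel₀ _ hzR
  have hcast : ((z - 1 : ℕ) : ℝ) = z - 1 := by rw [Nat.cast_sub (by omega), Nat.cast_one]
  refine ca_Icc_eq _ _ (fun i => ?_) ?_ <;> simp only [hzt, ← hcast, Nat.one_le_cast, Nat.cast_le,
    Nat.cast_eq_one, Nat.cast_inj]
  · split_ifs with hi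
    · omega
    · have hr : 0 < b * v i % z :=
        Nat.pos_of_ne_zero fun h => hnd i hi (Nat.dvd_of_mod_eq_zero h)
      have := Nat.mod_lt (b * v i) (by omega : 0 < z)
      omega
  · obtain ⟨a, ha0, haz, hacop, hba⟩ := exists_mul_mod_eq_one_or_sub_one hz hcop
    rcases (by omega : a = 1 ∨ 2 ≤ a) with rfl | ha2
    · refine ⟨i₀, ?_⟩
      rw [mul_one, Nat.mod_eq_of_lt hbz] at hba
      simpa using hba
    · obtain ⟨i, hi, rfl⟩ := hcover a ha2 haz hacop
      refine ⟨i, ?_⟩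
      have := Nat.mod_lt (b * v i) (by omega : 0 < z)
      simp only [hi, if_false]
      omega

end Lattice

section Generators

theorem sum_segment_eq_image_shear {d : ℕ} {i₀ : Fin d} (hi₀ : (i₀ : ℕ) = 0) {v : Fin d → ℝ}
    {g : Fin d → Fin d → ℝ} (hg0 : ∀ j : Fin d, (j : ℕ) = 0 → g j = v)
    (hg1 : ∀ j : Fin d, (j : ℕ) ≠ 0 → g j = Pi.single j 1) :
    ∑ j, segment ℝ 0 (g j) = shear i₀ v '' Icc 0 1 := by
  have hg : g = Function.update (fun j => Pi.single j 1) i₀ v := by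
    ext1 j
    by_cases hj : (j : ℕ) = 0
    · rw [hg0 j hj, show j = i₀ from Fin.ext (hj.trans hi₀.symm), Function.update_self]
    · rw [hg1 j hj, Function.update_of_ne (Fin.val_ne_iff.mp (hi₀ ▸ hj))]
  rw [← parallelepiped_eq_sum_segment, hg]
  rfl

variable {z k h : ℕ} {a : Fin k → ℕ} {p : Fin h → ℕ} {v : Fin (k + h) → ℕ} {i₀ : Fin (k + h)}

theorem coprime_or_eq_div_of_ne (ha : ∀ i, (a i).Coprime z) (hp : ∀ j, p j ∈ z.primeFactors)
    (hva : ∀ i : Fin k, (i : ℕ) ≠ 0 → v (Fin.castAdd h i) = a i)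
    (hvp : ∀ j : Fin h, v (Fin.natAdd k j) = z / p j) (hi₀ : (i₀ : ℕ) = 0) {i : Fin (k + h)}
    (hi : i ≠ i₀) : (v i).Coprime z ∨ ∃ q ∈ z.primeFactors, v i = z / q := by
  replace hi : (i : ℕ) ≠ 0 := hi₀ ▸ Fin.val_ne_iff.mpr hi
  induction i using Fin.addCases with
  | left i => exact .inl (hva i hi ▸ ha i)
  | right j => exact .inr ⟨p j, hp j, hvp j⟩

theorem exists_ne_eq_div_of_mem_primeFactors (hk : 0 < k)
    (hpran : ∀ q : ℕ, (∃ j, p j = q) ↔ q ∈ z.primeFactors)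
    (hvp : ∀ j : Fin h, v (Fin.natAdd k j) = z / p j) (hi₀ : (i₀ : ℕ) = 0) {q : ℕ}
    (hq : q ∈ z.primeFactors) : ∃ i ≠ i₀, v i = z / q := by
  obtain ⟨j, rfl⟩ := (hpran q).mpr hq
  exact ⟨Fin.natAdd k j, Fin.val_ne_iff.mp (by rw [Fin.val_natAdd, hi₀]; omega), hvp j⟩

theorem exists_ne_eq_of_coprime (hz : 2 ≤ z) (ha : StrictMono a)
    (haran : ∀ b : ℕ, (∃ i, a i = b) ↔ 1 ≤ b ∧ 2 * b ≤ z ∧ Nat.gcd b z = 1)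
    (hva : ∀ i : Fin k, (i : ℕ) ≠ 0 → v (Fin.castAdd h i) = a i) (hi₀ : (i₀ : ℕ) = 0) {c : ℕ}
    (hc : 2 ≤ c) (hcz : 2 * c ≤ z) (hcop : c.Coprime z) : ∃ i ≠ i₀, v i = c := by
  obtain ⟨i, rfl⟩ := (haran c).mpr ⟨by omega, hcz, hcop⟩
  obtain ⟨j, hj⟩ := (haran 1).mpr ⟨le_rfl, by omega, Nat.gcd_one_left z⟩
  have hi : (i : ℕ) ≠ 0 := fun hi => by
    have : a i ≤ a j := ha.monotone (Fin.le_def.mpr (hi ▸ Nat.zero_le _))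
    omega
  exact ⟨Fin.castAdd h i, Fin.val_ne_iff.mp (by simpa [hi₀] using hi), hva i hi⟩

end Generators

theorem extremal_parallelepipeds_general (z : ℕ) (hz : 3 ≤ z)
    (k : ℕ)
    (h : ℕ)
    (a : Fin k → ℕ) (ha : StrictMono a)
    (haran : ∀ b : ℕ, (∃ i, a i = b) ↔ 1 ≤ b ∧ 2 * b ≤ z ∧ Nat.gcd b z = 1)
    (p : Fin h → ℕ)
    (hpran : ∀ q : ℕ, (∃ j, p j = q) ↔ q ∈ z.primeFactors)
    -- the generator `v^z = (z, z α^z_2, …, z α^z_{d(z)}) = (z, a_2, …, a_k, z/p_1, …, z/p_h)`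
    (v : Fin (k + h) → ℕ)
    (hv0 : ∀ i : Fin k, (i : ℕ) = 0 → v (Fin.castAdd h i) = z)
    (hva : ∀ i : Fin k, (i : ℕ) ≠ 0 → v (Fin.castAdd h i) = a i)
    (hvp : ∀ j : Fin h, v (Fin.natAdd k j) = z / p j)
    -- the generators of `P^z`: the first is `v^z`, the others are standard basis vectors
    (g : Fin (k + h) → Fin (k + h) → ℝ)
    (hg0 : ∀ j : Fin (k + h), (j : ℕ) = 0 → g j = fun i => (v i : ℝ))
    (hg1 : ∀ j : Fin (k + h), (j : ℕ) ≠ 0 → g j = Pi.single j 1)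
    (P : Set (Fin (k + h) → ℝ))
    (hP : P = ∑ j : Fin (k + h), segment ℝ (0 : Fin (k + h) → ℝ) (g j)) :
    {x | x ∈ interior P ∧ IsLatticePoint x}.ncard = z.totient ∧
      ∀ w ∈ interior P, IsLatticePoint w → ca P w = (z : ℝ) - 1 := by
  obtain ⟨i₁, -⟩ := (haran 1).mpr ⟨le_rfl, by omega, Nat.gcd_one_left z⟩
  set i₀ : Fin (k + h) := ⟨0, by have := i₁.pos; omega⟩
  have hvi₀ : v i₀ = z := hv0 ⟨0, i₁.pos⟩ rfl
  have hv (i) (hi : i ≠ i₀) := coprime_or_eq_div_of_ne (fun i => ((haran _).mp ⟨i, rfl⟩).2.2)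
    (fun j => (hpran _).mp ⟨j, rfl⟩) hva hvp rfl hi
  have hcover_div (q) (hq : q ∈ z.primeFactors) (_ : q ≠ z) :=
    exists_ne_eq_div_of_mem_primeFactors i₁.pos hpran hvp (i₀ := i₀) rfl hq
  have hPT : P = shear i₀ (fun i => (v i : ℝ)) '' Icc 0 1 :=
    hP.trans (sum_segment_eq_image_shear rfl hg0 hg1)
  have hlat := hPT ▸ setOf_mem_interior_isLatticePoint (by omega) hvi₀
  have hT : Function.Injective (shear i₀ (fun i => (v i : ℝ))) :=
    shear_injective (by simpa [hvi₀] using (by omega : z ≠ 0))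
  refine ⟨?_, fun w hw hwlat => ?_⟩
  · rw [hlat, ncard_image_of_injective _ hT,
      ncard_image_of_injective _ (latticeCoords_injective (by omega)),
      ncard_setOf_forall_not_dvd_mul (by omega) hv hcover_div]
  · have hw' : w ∈ {x | x ∈ interior P ∧ IsLatticePoint x} := ⟨hw, hwlat⟩
    obtain ⟨_, ⟨b, ⟨hb0, hbz, hnd⟩, rfl⟩, rfl⟩ := hlat ▸ hw'
    rw [hPT, ca_image_of_injective _ hT]
    exact ca_Icc_latticeCoords (by omega)
      (fun _ => exists_ne_eq_of_coprime (by omega) ha haran hva rfl) hb0 hbz hnd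
      ((forall_not_dvd_mul_iff_coprime hb0 hbz hv hcover_div).mp hnd)

theorem extremal_parallelepipeds (z : ℕ) (hz : 3 ≤ z)
    (k : ℕ) (hk : 2 * k = z.totient)
    (h : ℕ) (hh : h = hComposite z)
    (a : Fin k → ℕ) (ha : StrictMono a)
    (haran : ∀ b : ℕ, (∃ i, a i = b) ↔ 1 ≤ b ∧ 2 * b ≤ z ∧ Nat.gcd b z = 1)
    (p : Fin h → ℕ) (hp : StrictMono p)
    (hpran : ∀ q : ℕ, (∃ j, p j = q) ↔ q ∈ z.primeFactors)
    -- the generator `v^z = (z, z α^z_2, …, z α^z_{d(z)}) = (z, a_2, …, a_k, z/p_1, …, z/p_h)`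
    (v : Fin (k + h) → ℕ)
    (hv0 : ∀ i : Fin k, (i : ℕ) = 0 → v (Fin.castAdd h i) = z)
    (hva : ∀ i : Fin k, (i : ℕ) ≠ 0 → v (Fin.castAdd h i) = a i)
    (hvp : ∀ j : Fin h, v (Fin.natAdd k j) = z / p j)
    -- the generators of `P^z`: the first is `v^z`, the others are standard basis vectors
    (g : Fin (k + h) → Fin (k + h) → ℝ)
    (hg0 : ∀ j : Fin (k + h), (j : ℕ) = 0 → g j = fun i => (v i : ℝ))
    (hg1 : ∀ j : Fin (k + h), (j : ℕ) ≠ 0 → g j = Pi.single j 1)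
    (P : Set (Fin (k + h) → ℝ))
    (hP : P = ∑ j : Fin (k + h), segment ℝ (0 : Fin (k + h) → ℝ) (g j)) :
    {x | x ∈ interior P ∧ IsLatticePoint x}.ncard = z.totient ∧
      ∀ w ∈ interior P, IsLatticePoint w → ca P w = (z : ℝ) - 1 :=
  extremal_parallelepipeds_general z hz k h a ha haran p hpran v hv0 hva hvp g hg0 hg1 P hP
end

section
/- Let Z = [0,g_1] + ... + [0,g_m] be the zonotope generated by g_1,...,g_m ∈ ℝ^d with center c = (g_1 + ... + g_m)/2. For every v ∈ int(Z), there exists a (d−1)-dimensional parallelepiped Q which is a translate of a parallelepiped generated by a subset of {g_1,...,g_m} such that v is contained in the interior of the parallelepiped P := conv(Q, 2c − Q), and P ⊆ Z. Moreover, if g_1,...,g_m ∈ ℤ^d, then P is a lattice parallelepiped. -/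
open Pointwise

/-!
Write `v = ∑ θⱼ gⱼ` with `θ ∈ (0,1)^m` and maximise the depth `l = minⱼ min(θⱼ, 1 - θⱼ)` over
all such representations. If `l = 1/2` then `v = c`, and any sign vector `ε` with `∑ εⱼ gⱼ ≠ 0`
does. Otherwise take an extreme point `θ` of the fibre of depth `≥ l`. Its coordinates strictly
inside `(l, 1 - l)` carry linearly independent generators, since otherwise `θ` is the midpoint of
two points of the fibre. The remaining coordinates equal `l` or `1 - l`, so they lie on one
diagonal of their cube, in some direction `ε`. The vector `w = ∑ εⱼ gⱼ` over these coordinates is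
not in the span of the free generators, since otherwise moving along the diagonal would increase
the depth. Completing the free generators to `d - 1` independent ones gives `S`. The image of
`[0,1]^S × (diagonal)` under `θ ↦ ∑ θⱼ gⱼ` is the parallelepiped `Q + [0, w] = conv(Q ∪ (2c - Q))`.
It lies in `Z`, contains `v` in its interior, and its edges are generators or `w`, so they are
integral when the `gⱼ` are.
-/

open Set Submodule Module Filter Topology

section Extension

variable {ι E : Type*} [AddCommGroup E] [Module ℝ E] {g : ι → E} {F : Finset ι} {x : E}

theorem card_add_one_le_finrank_of_notMem_span [FiniteDimensional ℝ E] (hF : LinearIndepOn ℝ g F)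
    (hx : x ∉ span ℝ (g '' F)) : F.card + 1 ≤ finrank ℝ E := by
  simpa using (hF.option (by rwa [← image_eq_range])).fintype_card_le_finrank

theorem exists_insert_linearIndepOn_notMem_span [DecidableEq ι] (hg : span ℝ (range g) = ⊤)
    (hF : LinearIndepOn ℝ g F) (hx : x ∉ span ℝ (g '' F)) (hcard : F.card + 1 < finrank ℝ E) :
    ∃ k ∉ F, LinearIndepOn ℝ g ↑(insert k F) ∧ x ∉ span ℝ (g '' ↑(insert k F)) := by
  classical
  obtain ⟨k, hk⟩ : ∃ k, g k ∉ span ℝ (insert x (g '' F)) := by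
    by_contra! h
    have htop : span ℝ (insert x (g '' F)) = ⊤ :=
      top_le_iff.1 (hg ▸ span_le.2 (range_subset_iff.2 h))
    have hle := finrank_span_finset_le_card (R := ℝ) (insert x (F.image g))
    rw [Finset.coe_insert, Finset.coe_image, Set.finrank, htop, finrank_top] at hle
    have := (Finset.card_insert_le x (F.image g)).trans (Nat.succ_le_succ Finset.card_image_le)
    omega
  have hkF : g k ∉ span ℝ (g '' F) := fun h => hk (span_mono (subset_insert _ _) h)
  refine ⟨k, fun h => hkF (subset_span (mem_image_of_mem g h)), ?_, ?_⟩
  · rw [Finset.coe_insert]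
    exact hF.insert hkF
  · rw [Finset.coe_insert, image_insert_eq]
    exact fun h => hk (mem_span_insert_exchange h hx)

theorem exists_superset_linearIndepOn_notMem_span [FiniteDimensional ℝ E]
    (hg : span ℝ (range g) = ⊤) (hF : LinearIndepOn ℝ g F) (hx : x ∉ span ℝ (g '' F)) :
    ∃ S, F ⊆ S ∧ S.card + 1 = finrank ℝ E ∧ LinearIndepOn ℝ g S ∧ x ∉ span ℝ (g '' S) := by
  classical
  induction h : finrank ℝ E - (F.card + 1) generalizing F with
  | zero =>
    have := card_add_one_le_finrank_of_notMem_span hF hx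
    exact ⟨F, subset_rfl, by omega, hF, hx⟩
  | succ n ih =>
    obtain ⟨k, hk, hkF, hkx⟩ := exists_insert_linearIndepOn_notMem_span hg hF hx (by omega)
    obtain ⟨S, hFS, hS⟩ := ih hkF hkx (by rw [Finset.card_insert_of_notMem hk]; omega)
    exact ⟨S, (Finset.subset_insert _ _).trans hFS, hS⟩

end Extension

theorem exists_sign_sum_smul_ne_zero {ι E : Type*} [Fintype ι] [AddCommGroup E] [Module ℝ E]
    {g : ι → E} (hg : g ≠ 0) : ∃ ε : ι → ℝ, (∀ j, ε j = 1 ∨ ε j = -1) ∧ ∑ j, ε j • g j ≠ 0 := by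
  classical
  obtain ⟨k, hk⟩ := Function.ne_iff.1 hg
  by_contra! h
  let ε : ι → ℝ := fun j => if j = k then -1 else 1
  have hdiff : ∑ j, (1 : ℝ) • g j - ∑ j, ε j • g j = (2 : ℝ) • g k := by
    rw [← Finset.sum_sub_distrib, Finset.sum_eq_single k (fun j _ hj => by simp [ε, hj]) (by simp)]
    simp only [ε, if_pos rfl]
    module
  rw [h _ (fun _ => Or.inl rfl), h ε (fun j => by by_cases j = k <;> simp [ε, *]), sub_zero,
    eq_comm, smul_eq_zero] at hdiff
  exact hk (hdiff.resolve_left two_ne_zero)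

theorem exists_pos_of_eventually_nhds_zero {p : ℝ → Prop} (h : ∀ᶠ t in 𝓝 0, p t) :
    ∃ t > 0, p t := by
  obtain ⟨t, ht, hpos⟩ := ((h.filter_mono nhdsWithin_le_nhds).and
    (self_mem_nhdsWithin (s := Ioi (0 : ℝ)))).exists
  exact ⟨t, hpos, ht⟩

theorem eq_zero_of_add_mem_of_sub_mem_extremePoints {E : Type*} [AddCommGroup E] [Module ℝ E]
    {A : Set E} {x y : E} (hx : x ∈ A.extremePoints ℝ) (hadd : x + y ∈ A) (hsub : x - y ∈ A) :
    y = 0 := by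
  have hseg : x ∈ openSegment ℝ (x + y) (x - y) :=
    ⟨1 / 2, 1 / 2, by norm_num, by norm_num, by norm_num, by module⟩
  have := congrArg (· - x) ((mem_extremePoints.1 hx).2 _ hadd _ hsub hseg).1
  simpa using this

section CubeDepth

variable {ι : Type*} [Fintype ι] [Nonempty ι]

noncomputable def cubeDepth (θ : ι → ℝ) : ℝ :=
  Finset.univ.inf' Finset.univ_nonempty fun j => min (θ j) (1 - θ j)

theorem le_cubeDepth_iff {θ : ι → ℝ} {l : ℝ} : l ≤ cubeDepth θ ↔ ∀ j, l ≤ θ j ∧ θ j ≤ 1 - l := by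
  simp only [cubeDepth, Finset.le_inf'_iff, Finset.mem_univ, true_imp_iff, le_min_iff, le_sub_comm]

theorem continuous_cubeDepth : Continuous (cubeDepth : (ι → ℝ) → ℝ) :=
  Continuous.finset_inf'_apply _ fun j _ =>
    (continuous_apply j).min (continuous_const.sub (continuous_apply j))

theorem mem_Icc_of_le_cubeDepth {θ : ι → ℝ} {l : ℝ} (hl : 0 ≤ l) (h : l ≤ cubeDepth θ) :
    θ ∈ Icc (0 : ι → ℝ) 1 :=
  ⟨fun j => hl.trans (le_cubeDepth_iff.1 h j).1,
    fun j => (le_cubeDepth_iff.1 h j).2.trans (by simpa using hl)⟩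

end CubeDepth

theorem eventually_le_add_mul_le {x l : ℝ} (hx : x ∈ Ioo l (1 - l)) (a b : ℝ) :
    ∀ᶠ t in 𝓝 0, l + t * b ≤ x + t * a ∧ x + t * a ≤ 1 - (l + t * b) := by
  have h₁ : ∀ᶠ t in 𝓝 (0 : ℝ), l + t * b < x + t * a :=
    ContinuousAt.eventually_lt (by fun_prop) (by fun_prop) (by simpa using hx.1)
  have h₂ : ∀ᶠ t in 𝓝 (0 : ℝ), x + t * a < 1 - (l + t * b) :=
    ContinuousAt.eventually_lt (by fun_prop) (by fun_prop) (by simpa using hx.2)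
  exact h₁.and h₂ |>.mono fun _ h => ⟨h.1.le, h.2.le⟩

theorem eq_or_eq_of_notMem_Ioo {x l : ℝ} (h : l ≤ x ∧ x ≤ 1 - l) (hx : x ∉ Ioo l (1 - l)) :
    x = l ∨ x = 1 - l := by
  rw [mem_Ioo, not_and_or, not_lt, not_lt] at hx
  rcases hx with hx | hx
  · exact Or.inl (le_antisymm hx h.1)
  · exact Or.inr (le_antisymm h.2 hx)

section DiagonalRep

variable {ι E : Type*} [Fintype ι] [AddCommGroup E] [Module ℝ E] {g : ι → E}

theorem sum_add_mul_smul_of_sum_smul_eq_zero {a : ι → ℝ} (ha : ∑ j, a j • g j = 0)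
    (θ : ι → ℝ) (t : ℝ) : ∑ j, (θ j + t * a j) • g j = ∑ j, θ j • g j := by
  simp only [add_smul, mul_smul, Finset.sum_add_distrib, ← Finset.smul_sum, ha, smul_zero,
    add_zero]

/-- Off `S`, `θ` lies on the diagonal of the unit cube from the vertex `(1 - ε) / 2`, at
parameter `μ`. -/
def IsDiagonalRep (g : ι → E) (v : E) (S : Finset ι) (ε θ : ι → ℝ) (μ : ℝ) : Prop :=
  (∀ j, ε j = 1 ∨ ε j = -1) ∧ μ ∈ Ioo (0 : ℝ) 1 ∧ (∀ j ∈ S, θ j ∈ Ioo (0 : ℝ) 1) ∧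
    (∀ j ∉ S, θ j = (1 - ε j) / 2 + ε j * μ) ∧ ∑ j, θ j • g j = v

theorem IsDiagonalRep.mono {v : E} {F S : Finset ι} {ε θ : ι → ℝ} {μ : ℝ}
    (h : IsDiagonalRep g v F ε θ μ) (hFS : F ⊆ S) : IsDiagonalRep g v S ε θ μ := by
  obtain ⟨hε, hμ, hF, hdiag, hv⟩ := h
  refine ⟨hε, hμ, fun j hj => ?_, fun j hj => hdiag j fun h => hj (hFS h), hv⟩
  by_cases hjF : j ∈ F
  · exact hF j hjF
  · rw [hdiag j hjF]
    rcases hε j with h | h <;> rw [h] <;> constructor <;> linarith [hμ.1, hμ.2]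

variable [Nonempty ι] {θ : ι → ℝ} {l : ℝ}

theorem sum_sign_smul_notMem_span_of_forall_cubeDepth_le [DecidableEq ι] (hl₀ : 0 ≤ l)
    (hθ : l ≤ cubeDepth θ) (hl : l < 1 / 2)
    (hmax : ∀ θ' ∈ Icc (0 : ι → ℝ) 1, ∑ j, θ' j • g j = ∑ j, θ j • g j → cubeDepth θ' ≤ l) :
    ∑ j ∈ (Finset.univ.filter fun j => θ j ∈ Ioo l (1 - l))ᶜ,
        (if θ j = l then 1 else -1 : ℝ) • g j ∉
      span ℝ (g '' ↑(Finset.univ.filter fun j => θ j ∈ Ioo l (1 - l))) := by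
  set F := Finset.univ.filter fun j => θ j ∈ Ioo l (1 - l)
  set ε : ι → ℝ := fun j => if θ j = l then 1 else -1
  intro hmem
  obtain ⟨a, ha⟩ := (mem_span_image_finset_iff_exists_fun' ℝ).1 hmem
  set dir : ι → ℝ := fun j => if j ∈ F then -a j else ε j
  have hdir : ∑ j, dir j • g j = 0 := by
    have hF : ∑ j ∈ F, dir j • g j = -∑ j ∈ F, a j • g j := by
      rw [← Finset.sum_neg_distrib]
      exact Finset.sum_congr rfl fun j hj => by simp [dir, hj]
    have hFc : ∑ j ∈ Fᶜ, dir j • g j = ∑ j ∈ Fᶜ, ε j • g j :=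
      Finset.sum_congr rfl fun j hj => by simp [dir, Finset.mem_compl.1 hj]
    rw [← Finset.sum_add_sum_compl F, hF, hFc, ha, neg_add_cancel]
  have hev : ∀ᶠ t in 𝓝 0, ∀ j, l + t * 1 ≤ θ j + t * dir j ∧ θ j + t * dir j ≤ 1 - (l + t * 1) := by
    have hsmall : ∀ᶠ t in 𝓝 (0 : ℝ), t < (1 - 2 * l) / 2 := eventually_lt_nhds (by linarith)
    refine eventually_all.2 fun j => ?_
    by_cases hj : j ∈ F
    · exact eventually_le_add_mul_le (Finset.mem_filter.1 hj).2 _ _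
    · refine hsmall.mono fun t ht => ?_
      have hdj : dir j = ε j := if_neg hj
      rcases eq_or_eq_of_notMem_Ioo (le_cubeDepth_iff.1 hθ j) (by simpa [F] using hj) with h | h
      · rw [hdj, show ε j = 1 from if_pos h, h]
        constructor <;> linarith
      · rw [hdj, show ε j = -1 from if_neg (by linarith), h]
        constructor <;> linarith
  obtain ⟨t, ht, hθt⟩ := exists_pos_of_eventually_nhds_zero hev
  have hdepth : l + t * 1 ≤ cubeDepth fun j => θ j + t * dir j := le_cubeDepth_iff.2 hθt
  have hIcc := mem_Icc_of_le_cubeDepth (by linarith) hdepth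
  have := hmax _ hIcc (sum_add_mul_smul_of_sum_smul_eq_zero hdir θ t)
  linarith

theorem linearIndepOn_of_mem_extremePoints {v : E}
    (hθ : θ ∈ {θ' | l ≤ cubeDepth θ' ∧ ∑ j, θ' j • g j = v}.extremePoints ℝ) :
    LinearIndepOn ℝ g ↑(Finset.univ.filter fun j => θ j ∈ Ioo l (1 - l)) := by
  classical
  set F := Finset.univ.filter fun j => θ j ∈ Ioo l (1 - l)
  rw [linearIndepOn_finset_iff]
  intro a ha i hi
  set dir : ι → ℝ := fun j => if j ∈ F then a j else 0
  have hdir : ∑ j, dir j • g j = 0 := by simpa [dir, ite_smul, Finset.sum_ite_mem] using ha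
  have hev : ∀ᶠ t in 𝓝 0, ∀ j, (l ≤ θ j + t * dir j ∧ θ j + t * dir j ≤ 1 - l) ∧
      (l ≤ θ j + -t * dir j ∧ θ j + -t * dir j ≤ 1 - l) := by
    refine eventually_all.2 fun j => ?_
    by_cases hj : j ∈ F
    · have h := eventually_le_add_mul_le (Finset.mem_filter.1 hj).2
      simpa [neg_mul_comm] using (h (dir j) 0).and (h (-dir j) 0)
    · simpa [dir, hj] using le_cubeDepth_iff.1 hθ.1.1 j
  obtain ⟨t, ht, hθt⟩ := exists_pos_of_eventually_nhds_zero hev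
  have hmem : ∀ s : ℝ, (∀ j, l ≤ θ j + s * dir j ∧ θ j + s * dir j ≤ 1 - l) →
      θ + s • dir ∈ {θ' | l ≤ cubeDepth θ' ∧ ∑ j, θ' j • g j = v} := fun s hs =>
    ⟨le_cubeDepth_iff.2 (by simpa using hs),
      by simpa using (sum_add_mul_smul_of_sum_smul_eq_zero hdir θ s).trans hθ.1.2⟩
  have hzero := eq_zero_of_add_mem_of_sub_mem_extremePoints hθ (hmem t fun j => (hθt j).1)
    (by simpa [sub_eq_add_neg, ← neg_smul] using hmem (-t) fun j => (hθt j).2)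
  simpa [dir, hi, ht.ne'] using congrFun hzero i

end DiagonalRep

section Core

variable {ι E : Type*} [Fintype ι] [AddCommGroup E] [Module ℝ E] {g : ι → E}

theorem isClosed_setOf_sum_smul_eq {θ₀ : ι → ℝ} :
    IsClosed {θ : ι → ℝ | ∑ j, θ j • g j = ∑ j, θ₀ j • g j} := by
  have hker := (LinearMap.ker (Fintype.linearCombination ℝ g)).closed_of_finiteDimensional
  convert hker.preimage (continuous_sub_right θ₀) using 1
  ext θ
  simp [Fintype.linearCombination_apply, sub_smul, Finset.sum_sub_distrib, sub_eq_zero]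

theorem exists_isDiagonalRep_of_forall_cubeDepth_le [Nonempty ι] [DecidableEq ι] {v : E}
    {θ₁ : ι → ℝ} {l : ℝ} (hl₀ : 0 < l) (hl : l < 1 / 2)
    (hθ₁ : l ≤ cubeDepth θ₁ ∧ ∑ j, θ₁ j • g j = v)
    (hmax : ∀ θ' ∈ Icc (0 : ι → ℝ) 1, ∑ j, θ' j • g j = v → cubeDepth θ' ≤ l) :
    ∃ F ε θ, IsDiagonalRep g v F ε θ l ∧ LinearIndepOn ℝ g ↑F ∧
      ∑ j ∈ Fᶜ, ε j • g j ∉ span ℝ (g '' ↑F) := by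
  set P := {θ | l ≤ cubeDepth θ ∧ ∑ j, θ j • g j = v}
  have hP : IsCompact P := isCompact_Icc.of_isClosed_subset
    ((isClosed_le continuous_const continuous_cubeDepth).inter
      (hθ₁.2 ▸ isClosed_setOf_sum_smul_eq))
    fun θ hθ => mem_Icc_of_le_cubeDepth hl₀.le hθ.1
  obtain ⟨θ, hθ⟩ := hP.extremePoints_nonempty ⟨θ₁, hθ₁⟩
  set F := Finset.univ.filter fun j => θ j ∈ Ioo l (1 - l)
  refine ⟨F, fun j => if θ j = l then 1 else -1, θ, ⟨fun j => ?_, ⟨hl₀, by linarith⟩,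
    fun j hj => ?_, fun j hj => ?_, hθ.1.2⟩, linearIndepOn_of_mem_extremePoints hθ,
    sum_sign_smul_notMem_span_of_forall_cubeDepth_le hl₀.le hθ.1.1 hl
      fun θ' h₁ h₂ => hmax θ' h₁ (h₂.trans hθ.1.2)⟩
  · dsimp only
    split_ifs <;> simp
  · have := (Finset.mem_filter.1 hj).2
    exact ⟨hl₀.trans this.1, this.2.trans (by linarith)⟩
  · dsimp only
    rcases eq_or_eq_of_notMem_Ioo (le_cubeDepth_iff.1 hθ.1.1 j) (by simpa [F] using hj) with h | h
    · rw [if_pos h, h]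
      ring
    · rw [if_neg (show θ j ≠ l by linarith), h]
      ring

theorem exists_isDiagonalRep_linearIndepOn [DecidableEq ι] (hg : g ≠ 0) {θ₀ : ι → ℝ}
    (hθ₀ : ∀ j, θ₀ j ∈ Ioo 0 1) :
    ∃ F ε θ μ, IsDiagonalRep g (∑ j, θ₀ j • g j) F ε θ μ ∧ LinearIndepOn ℝ g ↑F ∧
      ∑ j ∈ Fᶜ, ε j • g j ∉ span ℝ (g '' ↑F) := by
  have : Nonempty ι := let ⟨k, _⟩ := Function.ne_iff.1 hg; ⟨k⟩
  set K := Icc (0 : ι → ℝ) 1 ∩ {θ | ∑ j, θ j • g j = ∑ j, θ₀ j • g j}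
  have hθ₀K : θ₀ ∈ K := ⟨⟨fun j => (hθ₀ j).1.le, fun j => (hθ₀ j).2.le⟩, rfl⟩
  obtain ⟨θ₁, hθ₁K, hmax⟩ := (isCompact_Icc.inter_right isClosed_setOf_sum_smul_eq).exists_isMaxOn
    ⟨θ₀, hθ₀K⟩ continuous_cubeDepth.continuousOn
  set l := cubeDepth θ₁
  have hl₀ : 0 < l := lt_of_lt_of_le (by simpa [cubeDepth, Finset.lt_inf'_iff] using hθ₀)
    (hmax hθ₀K)
  have hθ₁ := le_cubeDepth_iff.1 (le_refl l)
  obtain hl | hl := (show l ≤ 1 / 2 by linarith [hθ₁ (Classical.arbitrary ι)]).eq_or_lt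
  · obtain ⟨ε, hε, hne⟩ := exists_sign_sum_smul_ne_zero hg
    refine ⟨∅, ε, θ₁, 1 / 2, ⟨hε, by norm_num, by simp, fun j _ => ?_, hθ₁K.2⟩, by simp,
      by simpa using hne⟩
    have := hθ₁ j
    rw [hl] at this
    linarith
  · obtain ⟨F, ε, θ, h⟩ := exists_isDiagonalRep_of_forall_cubeDepth_le hl₀ hl ⟨le_rfl, hθ₁K.2⟩
      fun θ' h₁ h₂ => hmax ⟨h₁, h₂⟩
    exact ⟨F, ε, θ, l, h⟩

theorem exists_isDiagonalRep_card_add_one_eq_finrank [DecidableEq ι] [FiniteDimensional ℝ E]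
    [Nontrivial E] (hg : span ℝ (range g) = ⊤) {θ₀ : ι → ℝ} (hθ₀ : ∀ j, θ₀ j ∈ Ioo 0 1) :
    ∃ S ε θ μ, IsDiagonalRep g (∑ j, θ₀ j • g j) S ε θ μ ∧ S.card + 1 = finrank ℝ E ∧
      LinearIndepOn ℝ g ↑S ∧ ∑ j ∈ Sᶜ, ε j • g j ∉ span ℝ (g '' ↑S) := by
  have hg₀ : g ≠ 0 := by
    rintro rfl
    exact top_ne_bot (hg ▸ span_eq_bot.2 (by rintro _ ⟨j, rfl⟩; rfl))
  obtain ⟨F, ε, θ, μ, hrep, hF, hw⟩ := exists_isDiagonalRep_linearIndepOn hg₀ hθ₀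
  obtain ⟨S, hFS, hcard, hS, hwS⟩ := exists_superset_linearIndepOn_notMem_span hg hF hw
  refine ⟨S, ε, θ, μ, hrep.mono hFS, hcard, hS, fun hmem => hwS ?_⟩
  rw [← Finset.sum_sdiff (Finset.compl_subset_compl.2 hFS)]
  refine add_mem (sum_mem fun j hj => smul_mem _ _ (subset_span (mem_image_of_mem g ?_))) hmem
  simpa using (Finset.mem_sdiff.1 hj).2

end Core

theorem vadd_eq_singleton_add {E : Type*} [AddCommGroup E] (a : E) (A : Set E) :
    a +ᵥ A = {a} + A := by
  rw [Set.singleton_add]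
  rfl

section Parallelepiped

variable {ι E : Type*} [AddCommGroup E] [Module ℝ E]

theorem convexHull_union_vadd {A : Set E} (hA : Convex ℝ A) (w : E) :
    convexHull ℝ (A ∪ (w +ᵥ A)) = A + segment ℝ 0 w := by
  have : A ∪ (w +ᵥ A) = A + {0, w} := by
    rw [Set.insert_eq, Set.add_union, Set.add_singleton, Set.add_singleton]
    simp [← Set.image_vadd, add_comm]
  rw [this, convexHull_add, hA.convexHull_eq, convexHull_pair]

theorem singleton_sum_sub_sum_segment (s : Finset ι) (f : ι → E) :
    {∑ j ∈ s, f j} - ∑ j ∈ s, segment ℝ 0 (f j) = ∑ j ∈ s, segment ℝ 0 (f j) := by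
  rw [← Set.finsetSum_singleton, ← Finset.sum_sub_distrib]
  refine Finset.sum_congr rfl fun j _ => ?_
  rw [Set.singleton_sub]
  convert image_segment ℝ (AffineMap.const ℝ E (f j) - AffineMap.id ℝ E) 0 (f j) using 1
  · rfl
  · simp [segment_symm]

end Parallelepiped

section DiagonalParallelepiped

variable {ι E : Type*} [Fintype ι] [DecidableEq ι] [AddCommGroup E] [Module ℝ E]
  (g : ι → E) (S : Finset ι) (ε : ι → ℝ)

/-- `diagonalBase g S ε +ᵥ parallelepiped (diagonalFrame g S ε)` is the image under
`θ ↦ ∑ θⱼ • gⱼ` of the set of `θ` that are free in `[0, 1]` on `S` and, off `S`, lie on the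
diagonal of the cube from the vertex `(1 - ε) / 2` to the opposite vertex. -/
noncomputable def diagonalBase : E := ∑ j ∈ Sᶜ, ((1 - ε j) / 2) • g j

noncomputable def diagonalDir : E := ∑ j ∈ Sᶜ, ε j • g j

noncomputable def diagonalFrame (o : Option S) : E := o.casesOn' (diagonalDir g S ε) fun j => g j

variable {g S ε}

theorem diagonalBase_add_sum_smul_diagonalFrame {θ : ι → ℝ} {μ : ℝ}
    (hθ : ∀ j ∉ S, θ j = (1 - ε j) / 2 + ε j * μ) :
    diagonalBase g S ε + ∑ o, (o.casesOn' μ fun j => θ j) • diagonalFrame g S ε o =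
      ∑ j, θ j • g j := by
  have hSc : ∑ j ∈ Sᶜ, θ j • g j = diagonalBase g S ε + μ • diagonalDir g S ε := by
    rw [diagonalBase, diagonalDir, Finset.smul_sum, ← Finset.sum_add_distrib]
    refine Finset.sum_congr rfl fun j hj => ?_
    rw [hθ j (Finset.mem_compl.1 hj)]
    module
  rw [Fintype.sum_option, ← Finset.sum_add_sum_compl S, hSc]
  simp only [diagonalFrame, Option.casesOn'_none, Option.casesOn'_some,
    Finset.sum_coe_sort S fun j => θ j • g j]
  abel

theorem sum_eq_two_smul_diagonalBase_add :
    ∑ j, g j = (2 : ℝ) • diagonalBase g S ε + ∑ j ∈ S, g j + diagonalDir g S ε := by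
  have hSc : ∑ j ∈ Sᶜ, g j = ∑ j ∈ Sᶜ, ((2 : ℝ) • ((1 - ε j) / 2) • g j + ε j • g j) :=
    Finset.sum_congr rfl fun j _ => by module
  rw [← Finset.sum_add_sum_compl S, hSc, Finset.sum_add_distrib, diagonalBase, diagonalDir,
    Finset.smul_sum]
  abel

theorem singleton_sum_sub_vadd_sum_segment :
    {∑ j, g j} - (diagonalBase g S ε +ᵥ ∑ j ∈ S, segment ℝ 0 (g j)) =
      diagonalDir g S ε +ᵥ (diagonalBase g S ε +ᵥ ∑ j ∈ S, segment ℝ 0 (g j)) := by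
  rw [vadd_eq_singleton_add, sub_add_eq_sub_sub, Set.singleton_sub_singleton,
    sum_eq_two_smul_diagonalBase_add (S := S) (ε := ε),
    show (2 : ℝ) • diagonalBase g S ε + ∑ j ∈ S, g j + diagonalDir g S ε - diagonalBase g S ε =
      (diagonalDir g S ε + diagonalBase g S ε) + ∑ j ∈ S, g j by module,
    ← Set.singleton_add_singleton, add_sub_assoc, singleton_sum_sub_sum_segment,
    vadd_eq_singleton_add, ← add_assoc, Set.singleton_add_singleton]

theorem vadd_parallelepiped_diagonalFrame :
    diagonalBase g S ε +ᵥ parallelepiped (diagonalFrame g S ε) =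
      (diagonalBase g S ε +ᵥ ∑ j ∈ S, segment ℝ 0 (g j)) + segment ℝ 0 (diagonalDir g S ε) := by
  rw [parallelepiped_eq_sum_segment, Fintype.sum_option, vadd_add_assoc, add_comm]
  simp only [diagonalFrame, Option.casesOn'_none, Option.casesOn'_some,
    Finset.sum_coe_sort S fun j => segment ℝ 0 (g j)]

theorem convexHull_union_singleton_sum_sub :
    convexHull ℝ ((diagonalBase g S ε +ᵥ ∑ j ∈ S, segment ℝ 0 (g j)) ∪
        ({∑ j, g j} - (diagonalBase g S ε +ᵥ ∑ j ∈ S, segment ℝ 0 (g j)))) =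
      diagonalBase g S ε +ᵥ parallelepiped (diagonalFrame g S ε) := by
  rw [singleton_sum_sub_vadd_sum_segment,
    convexHull_union_vadd ((convex_sum _ fun _ _ => convex_segment _ _).vadd _),
    vadd_parallelepiped_diagonalFrame]

theorem vadd_parallelepiped_diagonalFrame_subset (hε : ∀ j, ε j = 1 ∨ ε j = -1) :
    diagonalBase g S ε +ᵥ parallelepiped (diagonalFrame g S ε) ⊆ parallelepiped g := by
  rintro _ ⟨_, hx, rfl⟩
  obtain ⟨t, ht, rfl⟩ := (mem_parallelepiped_iff _ _).1 hx
  have ht' : ∀ o, 0 ≤ t o ∧ t o ≤ 1 := fun o => ⟨ht.1 o, ht.2 o⟩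
  set θ : ι → ℝ := fun j => if hj : j ∈ S then t (some ⟨j, hj⟩) else (1 - ε j) / 2 + ε j * t none
  have hsum : diagonalBase g S ε + ∑ o, t o • diagonalFrame g S ε o = ∑ j, θ j • g j := by
    rw [← diagonalBase_add_sum_smul_diagonalFrame (μ := t none) fun j hj => dif_neg hj]
    congr! 3 with o
    rcases o with _ | j
    · rfl
    · simp
  dsimp only
  rw [vadd_eq_add, hsum]
  refine (mem_parallelepiped_iff _ _).2 ⟨θ, ⟨fun j => ?_, fun j => ?_⟩, rfl⟩ <;>
    by_cases hj : j ∈ S <;> simp only [θ, hj, dite_true, dite_false, Pi.zero_apply, Pi.one_apply]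
  · exact (ht' _).1
  · rcases hε j with h | h <;> rw [h] <;> linarith [ht' none]
  · exact (ht' _).2
  · rcases hε j with h | h <;> rw [h] <;> linarith [ht' none]

end DiagonalParallelepiped

section Interior

variable {ι κ E : Type*} [Fintype ι] [Fintype κ] [NormedAddCommGroup E] [NormedSpace ℝ E]

theorem sum_smul_mem_interior_parallelepiped [FiniteDimensional ℝ E] {b : κ → E}
    (hb : LinearIndependent ℝ b) (hcard : Fintype.card κ = finrank ℝ E) {t : κ → ℝ}
    (ht : ∀ i, t i ∈ Ioo 0 1) : ∑ i, t i • b i ∈ interior (parallelepiped b) := by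
  have hsurj : Function.Surjective (Fintype.linearCombination ℝ b) := by
    rw [← LinearMap.range_eq_top, Fintype.range_linearCombination,
      hb.span_eq_top_of_card_eq_finrank' hcard]
  have hopen := LinearMap.isOpenMap_of_finiteDimensional _ hsurj _
    (isOpen_set_pi finite_univ fun _ _ => isOpen_Ioo (a := (0 : ℝ)) (b := 1))
  refine interior_maximal ?_ hopen ⟨t, fun i _ => ht i, Fintype.linearCombination_apply ℝ b t⟩
  rintro _ ⟨s, hs, rfl⟩
  exact (mem_parallelepiped_iff _ _).2 ⟨s, ⟨fun i => (hs i trivial).1.le,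
    fun i => (hs i trivial).2.le⟩, Fintype.linearCombination_apply ℝ b s⟩

theorem exists_mem_Ioo_of_mem_interior_parallelepiped {g : ι → E} {v : E}
    (hv : v ∈ interior (parallelepiped g)) :
    ∃ θ : ι → ℝ, (∀ j, θ j ∈ Ioo 0 1) ∧ ∑ j, θ j • g j = v := by
  -- `v` divides the segment from the centre `c` to a point of `Z` beyond `v` in ratio `s : 1`.
  set c := ∑ j, (1 / 2 : ℝ) • g j
  have hev : ∀ᶠ s in 𝓝 (0 : ℝ), v + s • (v - c) ∈ parallelepiped g :=
    (Continuous.tendsto' (by fun_prop) 0 v (by simp)).eventually (mem_interior_iff_mem_nhds.1 hv)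
  obtain ⟨s, hs, hmem⟩ := exists_pos_of_eventually_nhds_zero hev
  obtain ⟨θ, hθ, heq⟩ := (mem_parallelepiped_iff _ _).1 hmem
  refine ⟨fun j => (θ j + s / 2) / (1 + s), fun j => ?_, ?_⟩
  · obtain ⟨h₀, h₁⟩ : 0 ≤ θ j ∧ θ j ≤ 1 := ⟨hθ.1 j, hθ.2 j⟩
    exact ⟨by positivity, (div_lt_one (by positivity)).2 (by linarith)⟩
  · have hsum : ∑ j, ((θ j + s / 2) / (1 + s)) • g j = (1 + s)⁻¹ • (∑ j, θ j • g j + s • c) := by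
      simp only [c, Finset.smul_sum, ← Finset.sum_add_distrib]
      exact Finset.sum_congr rfl fun j _ => by rw [div_eq_inv_mul]; module
    rw [hsum, ← heq, show v + s • (v - c) + s • c = (1 + s) • v by module,
      inv_smul_smul₀ (by positivity)]

theorem IsDiagonalRep.mem_interior [DecidableEq ι] [FiniteDimensional ℝ E] {g : ι → E} {v : E}
    {S : Finset ι} {ε θ : ι → ℝ} {μ : ℝ}
    (h : IsDiagonalRep g v S ε θ μ) (hb : LinearIndependent ℝ (diagonalFrame g S ε))
    (hcard : S.card + 1 = finrank ℝ E) :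
    v ∈ interior (diagonalBase g S ε +ᵥ parallelepiped (diagonalFrame g S ε)) := by
  obtain ⟨-, hμ, hS, hdiag, rfl⟩ := h
  rw [interior_vadd, ← diagonalBase_add_sum_smul_diagonalFrame hdiag]
  refine vadd_mem_vadd_set (sum_smul_mem_interior_parallelepiped hb (by simpa using hcard) ?_)
  rintro (_ | j)
  exacts [hμ, hS j j.2]

theorem span_range_eq_top_of_interior_parallelepiped_nonempty {g : ι → E}
    (h : (interior (parallelepiped g)).Nonempty) : span ℝ (range g) = ⊤ := by
  refine (span ℝ (range g)).eq_top_of_nonempty_interior' (h.mono (interior_mono ?_))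
  rintro _ ⟨t, -, rfl⟩
  exact sum_mem fun j _ => smul_mem _ _ (subset_span (mem_range_self j))

end Interior

theorem IsLatticePoint.sum_smul {d : ℕ} {ι : Type*} (s : Finset ι) {a : ι → ℝ}
    {x : ι → Fin d → ℝ} (ha : ∀ j ∈ s, ∃ z : ℤ, a j = z) (hx : ∀ j ∈ s, IsLatticePoint (x j)) :
    IsLatticePoint (∑ j ∈ s, a j • x j) := by
  intro i
  choose! za hza using ha
  choose! zx hzx using hx
  refine ⟨∑ j ∈ s, za j * zx j i, ?_⟩
  simp only [Finset.sum_apply, Pi.smul_apply, smul_eq_mul, Int.cast_sum, Int.cast_mul]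
  exact Finset.sum_congr rfl fun j hj => by rw [hza j hj, hzx j hj i]

section Lattice

variable {d : ℕ} {ι : Type*} [Fintype ι] [DecidableEq ι] {g : ι → Fin d → ℝ} {S : Finset ι}
  {ε : ι → ℝ}

theorem isLatticePoint_diagonalBase (hε : ∀ j, ε j = 1 ∨ ε j = -1)
    (hg : ∀ j, IsLatticePoint (g j)) : IsLatticePoint (diagonalBase g S ε) := by
  refine IsLatticePoint.sum_smul _ (fun j _ => ?_) fun j _ => hg j
  rcases hε j with h | h
  · exact ⟨0, by norm_num [h]⟩
  · exact ⟨1, by norm_num [h]⟩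

theorem isLatticePoint_diagonalFrame (hε : ∀ j, ε j = 1 ∨ ε j = -1)
    (hg : ∀ j, IsLatticePoint (g j)) (o : Option S) : IsLatticePoint (diagonalFrame g S ε o) := by
  rcases o with _ | j
  · refine IsLatticePoint.sum_smul _ (fun j _ => ?_) fun j _ => hg j
    rcases hε j with h | h
    · exact ⟨1, by norm_num [h]⟩
    · exact ⟨-1, by norm_num [h]⟩
  · exact hg j

end Lattice

theorem zonotopal_steinitz
    {d m : ℕ} (g : Fin m → Fin d → ℝ)
    (Z : Set (Fin d → ℝ))
    (hZ : Z = ∑ j : Fin m, segment ℝ (0 : Fin d → ℝ) (g j))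
    (c : Fin d → ℝ) (hc : c = (2 : ℝ)⁻¹ • ∑ j : Fin m, g j)
    (v : Fin d → ℝ) (hv : v ∈ interior Z) :
    ∃ (S : Finset (Fin m)) (t : Fin d → ℝ) (Q P : Set (Fin d → ℝ)),
      S.card = d - 1 ∧
      LinearIndependent ℝ (fun j : S => g j) ∧
      Q = t +ᵥ ∑ j ∈ S, segment ℝ (0 : Fin d → ℝ) (g j) ∧
      P = convexHull ℝ (Q ∪ (({(2 : ℝ) • c} : Set (Fin d → ℝ)) - Q)) ∧
      v ∈ interior P ∧ P ⊆ Z ∧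
      ((∀ j, IsLatticePoint (g j)) →
        ∃ (u : Fin d → ℝ) (b : Fin d → Fin d → ℝ),
          IsLatticePoint u ∧ (∀ j, IsLatticePoint (b j)) ∧
          LinearIndependent ℝ b ∧
          P = u +ᵥ ∑ j : Fin d, segment ℝ (0 : Fin d → ℝ) (b j)) := by
  obtain rfl | hd := Nat.eq_zero_or_pos d
  · have huniv (A : Set (Fin 0 → ℝ)) (h : A.Nonempty) : univ = A := h.eq_univ.symm
    refine ⟨∅, 0, _, univ, rfl, linearIndependent_empty_type, rfl, huniv _ (by simp), by simp,
      fun x _ => Subsingleton.elim v x ▸ interior_subset hv, fun _ => ⟨0, 0, fun i => i.elim0,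
        fun i => i.elim0, linearIndependent_empty_type, huniv _ (by simp)⟩⟩
  have : Nonempty (Fin d) := ⟨⟨0, hd⟩⟩
  rw [← parallelepiped_eq_sum_segment] at hZ
  subst hZ hc
  have hspan := span_range_eq_top_of_interior_parallelepiped_nonempty ⟨v, hv⟩
  obtain ⟨θ₀, hθ₀, rfl⟩ := exists_mem_Ioo_of_mem_interior_parallelepiped hv
  obtain ⟨S, ε, θ, μ, hrep, hcard, hS, hw⟩ := exists_isDiagonalRep_card_add_one_eq_finrank hspan hθ₀
  have hb : LinearIndependent ℝ (diagonalFrame g S ε) := hS.option (by rwa [← image_eq_range])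
  rw [finrank_fin_fun] at hcard
  refine ⟨S, diagonalBase g S ε, _, _, by omega, hS, rfl, rfl, ?_⟩
  rw [smul_inv_smul₀ two_ne_zero, convexHull_union_singleton_sum_sub]
  refine ⟨hrep.mem_interior hb (by simpa using hcard),
    vadd_parallelepiped_diagonalFrame_subset hrep.1, fun hg => ?_⟩
  let e := Fintype.equivFinOfCardEq (by simpa using hcard : Fintype.card (Option S) = d)
  refine ⟨diagonalBase g S ε, diagonalFrame g S ε ∘ e.symm, isLatticePoint_diagonalBase hrep.1 hg,
    fun i => isLatticePoint_diagonalFrame hrep.1 hg _, hb.comp _ e.symm.injective, ?_⟩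
  rw [← parallelepiped_eq_sum_segment, parallelepiped_comp_equiv]
end

section
/- Let n ∈ ℤ^d_{>0} be a velocity vector and let Z_n := [0,e_1] + ... + [0,e_d] + [0,n] be the lonely runner zonotope. Then the number of interior lattice points of Z_n satisfies #(int(Z_n) ∩ ℤ^d) = Σ_ℓ φ(ℓ), where the sum runs over all positive integers ℓ that divide n_j for at least one index j ∈ {1,...,d}, and φ is Euler's totient function. -/
open Pointwise

/-!
An interior point of `Z_n` is a point `x` with `0 < xᵢ - t nᵢ < 1` for all `i` at some time
`t ∈ (0, 1)`: the interior of the cube plus a segment is the open cube plus the open segment,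
since the latter is open and convex with closure `Z_n`. For a lattice point `m` of that kind,
`q = minᵢ mᵢ / nᵢ` is a fraction in `(0, 1]` whose denominator divides some `nⱼ`, and
`mᵢ = ⌈q nᵢ⌉`; conversely `(⌈q nᵢ⌉)ᵢ` is an interior lattice point for every such `q`, and
`q ↦ (⌈q nᵢ⌉)ᵢ` is injective on these fractions. Hence the interior lattice points are counted by
the reduced fractions in `(0, 1]` with denominator `ℓ` dividing some `nⱼ`: `φ(ℓ)` for each `ℓ`.
-/

open Set Filter Topology

def fractionsWithDenIn (D : Finset ℕ) : Finset ℚ :=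
  D.biUnion fun ℓ => ({a ∈ Finset.Ioc 0 ℓ | ℓ.Coprime a}).image fun a : ℕ => (a : ℚ) / ℓ

theorem den_natCast_div_of_coprime {a ℓ : ℕ} (hℓ : 0 < ℓ) (h : ℓ.Coprime a) :
    ((a : ℚ) / ℓ).den = ℓ := by
  have := Rat.den_div_eq_of_coprime (a := a) (b := ℓ) (by exact_mod_cast hℓ) h.symm
  push_cast at this
  exact_mod_cast this

theorem mem_fractionsWithDenIn {D : Finset ℕ} {q : ℚ} :
    q ∈ fractionsWithDenIn D ↔ 0 < q ∧ q ≤ 1 ∧ q.den ∈ D := by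
  simp only [fractionsWithDenIn, Finset.mem_biUnion, Finset.mem_image, Finset.mem_filter,
    Finset.mem_Ioc]
  constructor
  · rintro ⟨ℓ, hℓD, a, ⟨⟨ha0, haℓ⟩, hcop⟩, rfl⟩
    have hℓ : (0 : ℚ) < ℓ := by exact_mod_cast ha0.trans_le haℓ
    refine ⟨by positivity, (div_le_one hℓ).2 (by exact_mod_cast haℓ), ?_⟩
    rwa [den_natCast_div_of_coprime (ha0.trans_le haℓ) hcop]
  · rintro ⟨hq0, hq1, hqD⟩
    have hnum : 0 < q.num := Rat.num_pos.2 hq0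
    refine ⟨q.den, hqD, q.num.toNat, ⟨⟨by omega, ?_⟩, ?_⟩, ?_⟩
    · have : q.num ≤ q.den := Rat.num_le_denom_iff.2 hq1
      omega
    · have : q.num.toNat = q.num.natAbs := by omega
      simpa [this, Nat.coprime_comm] using q.reduced
    · have : ((q.num.toNat : ℕ) : ℚ) = q.num := by exact_mod_cast Int.toNat_of_nonneg hnum.le
      rw [this, Rat.num_div_den]

theorem card_fractionsWithDenIn (D : Finset ℕ) :
    (fractionsWithDenIn D).card = ∑ ℓ ∈ D, ℓ.totient := by
  rw [fractionsWithDenIn, Finset.card_biUnion]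
  · refine Finset.sum_congr rfl fun ℓ _ => ?_
    rw [Finset.card_image_of_injOn, ← Nat.filter_coprime_Ico_eq_totient ℓ 1]
    · congr 1
      ext a
      simp only [Finset.mem_filter, Finset.mem_Ioc, Finset.mem_Ico]
      omega
    · intro a ha b hb hab
      have hℓ : (ℓ : ℚ) ≠ 0 := by
        simp only [Finset.coe_filter, Finset.mem_Ioc] at ha
        exact_mod_cast (ha.1.1.trans_le ha.1.2).ne'
      exact_mod_cast (div_left_inj' hℓ).1 hab
  · intro ℓ _ ℓ' _ hne
    simp only [Function.onFun, Finset.disjoint_left, Finset.mem_image, Finset.mem_filter,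
      Finset.mem_Ioc]
    rintro _ ⟨a, ⟨⟨ha0, haℓ⟩, ha⟩, rfl⟩ ⟨b, ⟨⟨hb0, hbℓ⟩, hb⟩, hab⟩
    apply hne
    rw [← den_natCast_div_of_coprime (ha0.trans_le haℓ) ha,
      ← den_natCast_div_of_coprime (hb0.trans_le hbℓ) hb, hab]

section Zonotope

variable {ι : Type*}

theorem segment_zero_single_eq_image [DecidableEq ι] (j : ι) :
    segment ℝ 0 (Pi.single j (1 : ℝ)) = Pi.single j '' Icc (0 : ℝ) 1 := by
  rw [segment_eq_image']
  simp only [sub_zero, zero_add, ← Pi.single_smul, smul_eq_mul, mul_one]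

theorem sum_segment_zero_single [Fintype ι] [DecidableEq ι] :
    ∑ j : ι, segment ℝ 0 (Pi.single j (1 : ℝ)) = univ.pi fun _ => Icc 0 1 := by
  ext x
  simp only [segment_zero_single_eq_image, mem_fintype_sum, mem_image, mem_univ_pi]
  constructor
  · rintro ⟨g, hg, rfl⟩ i
    choose θ hθ hgθ using hg
    simpa [← hgθ, Finset.univ_sum_single θ] using hθ i
  · intro hx
    exact ⟨fun j => Pi.single j (x j), fun j => ⟨x j, hx j, rfl⟩, Finset.univ_sum_single x⟩

theorem closure_pi_Ioo_add_openSegment [Finite ι] (v : ι → ℝ) :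
    closure ((univ.pi fun _ => Ioo 0 1) + openSegment ℝ 0 v) =
      (univ.pi fun _ => Icc 0 1) + segment ℝ 0 v := by
  refine subset_antisymm (closure_minimal ?_ ?_) ?_
  · exact add_subset_add (pi_mono fun _ _ => Ioo_subset_Icc_self)
      (openSegment_subset_segment ℝ 0 v)
  · rw [← convexHull_pair]
    exact ((isCompact_univ_pi fun _ => isCompact_Icc).add
      (((finite_singleton v).insert 0).isCompact_convexHull (𝕜 := ℝ))).isClosed
  · rintro _ ⟨x, hx, y, hy, rfl⟩
    rw [← closure_openSegment] at hy
    have hx' : x ∈ closure (univ.pi fun _ => Ioo (0 : ℝ) 1) := by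
      rw [closure_pi_set]
      simpa [closure_Ioo zero_ne_one] using hx
    exact map_mem_closure₂ continuous_add hx' hy fun a ha b hb => add_mem_add ha hb

theorem interior_pi_Icc_add_segment [Finite ι] (v : ι → ℝ) :
    interior ((univ.pi fun _ => Icc 0 1) + segment ℝ 0 v) =
      (univ.pi fun _ => Ioo 0 1) + openSegment ℝ 0 v := by
  have hopen : IsOpen ((univ.pi fun _ => Ioo (0 : ℝ) 1) + openSegment ℝ 0 v) :=
    (isOpen_set_pi finite_univ fun _ _ => isOpen_Ioo).add_right
  have hconvex : Convex ℝ ((univ.pi fun _ => Ioo (0 : ℝ) 1) + openSegment ℝ 0 v) :=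
    (convex_pi fun _ _ => convex_Ioo 0 1).add (convex_openSegment 0 v)
  have hne : ((univ.pi fun _ => Ioo (0 : ℝ) 1) + openSegment ℝ 0 v).Nonempty :=
    ⟨_, add_mem_add (a := fun _ => 1 / 2) (by norm_num [mem_univ_pi])
      (midpoint_mem_openSegment 0 v)⟩
  rw [← closure_pi_Ioo_add_openSegment, hconvex.interior_closure_eq_interior_of_nonempty_interior
    (hopen.interior_eq.symm ▸ hne), hopen.interior_eq]

theorem mem_pi_Ioo_add_openSegment_iff {v x : ι → ℝ} :
    x ∈ (univ.pi fun _ => Ioo 0 1) + openSegment ℝ 0 v ↔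
      ∃ t ∈ Ioo (0 : ℝ) 1, ∀ i, x i - t * v i ∈ Ioo (0 : ℝ) 1 := by
  simp only [openSegment_eq_image', Set.mem_add, mem_image, mem_univ_pi]
  constructor
  · rintro ⟨y, hy, _, ⟨t, ht, rfl⟩, rfl⟩
    exact ⟨t, ht, fun i => by simpa using hy i⟩
  · rintro ⟨t, ht, hx⟩
    exact ⟨x - t • v, fun i => by simpa using hx i, _, ⟨t, ht, rfl⟩, by simp⟩

end Zonotope

section Ceil

variable {ι : Type*} {n : ι → ℤ}

theorem exists_mem_Ioo_forall_ceil_sub_mul_mem_Ioo [Finite ι] (hn : ∀ i, 0 < n i) {q : ℚ} (hq0 : 0 < q)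
    (hq1 : q ≤ 1) : ∃ t ∈ Ioo (0 : ℝ) 1, ∀ i, (⌈q * n i⌉ : ℝ) - t * n i ∈ Ioo (0 : ℝ) 1 := by
  have hceil : ∀ i, (⌈q * n i⌉ : ℝ) - 1 < q * n i ∧ (q * n i : ℝ) ≤ ⌈q * n i⌉ := fun i => by
    constructor
    · exact_mod_cast Int.ceil_lt_add_one (q * n i) |> sub_lt_iff_lt_add.2
    · exact_mod_cast Int.le_ceil (q * n i)
  -- letting `t` increase to `q`, the coordinates `⌈q nᵢ⌉ - t nᵢ` decrease to `⌈q nᵢ⌉ - q nᵢ ∈ [0, 1)`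
  have hev : ∀ᶠ t : ℝ in 𝓝[<] (q : ℝ), t ∈ Ioo (0 : ℝ) 1 ∧
      ∀ i, (⌈q * n i⌉ : ℝ) - t * n i ∈ Ioo (0 : ℝ) 1 := by
    have hlt : ∀ᶠ t : ℝ in 𝓝[<] (q : ℝ), t < q := self_mem_nhdsWithin
    have hpos : ∀ᶠ t : ℝ in 𝓝[<] (q : ℝ), 0 < t :=
      nhdsWithin_le_nhds (eventually_gt_nhds (by exact_mod_cast hq0))
    have hupper : ∀ i, ∀ᶠ t : ℝ in 𝓝[<] (q : ℝ), (⌈q * n i⌉ : ℝ) - t * n i < 1 := fun i => by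
      have : Tendsto (fun t : ℝ => (⌈q * n i⌉ : ℝ) - t * n i) (𝓝 q) (𝓝 (⌈q * n i⌉ - q * n i)) :=
        (continuous_const.sub (continuous_id.mul continuous_const)).tendsto _
      exact nhdsWithin_le_nhds (this.eventually_lt_const (by linarith [hceil i]))
    filter_upwards [hlt, hpos, eventually_all.2 hupper] with t htq ht0 ht
    have hq1' : (q : ℝ) ≤ 1 := by exact_mod_cast hq1
    refine ⟨⟨ht0, by linarith⟩, fun i => ⟨?_, ht i⟩⟩
    have : t * n i < q * n i := mul_lt_mul_of_pos_right htq (by exact_mod_cast hn i)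
    linarith [hceil i]
  exact hev.exists

theorem exists_ceil_mul_eq [Finite ι] [Nonempty ι] (hn : ∀ i, 0 < n i) {m : ι → ℤ} {t : ℝ}
    (ht : t ∈ Ioo (0 : ℝ) 1) (hm : ∀ i, (m i : ℝ) - t * n i ∈ Ioo (0 : ℝ) 1) :
    ∃ q : ℚ, (0 < q ∧ q ≤ 1 ∧ ∃ j, (q.den : ℤ) ∣ n j) ∧ ∀ i, ⌈q * n i⌉ = m i := by
  have hnQ : ∀ i, (0 : ℚ) < n i := fun i => by exact_mod_cast hn i
  have hnR : ∀ i, (0 : ℝ) < n i := fun i => by exact_mod_cast hn i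
  -- `q = mⱼ / nⱼ` is the first time at which a runner `t nᵢ` reaches its coordinate `mᵢ`
  obtain ⟨j, hj⟩ := Finite.exists_min fun i => (m i : ℚ) / n i
  set q : ℚ := m j / n j with hq
  have htq : t < q := by
    rw [hq, Rat.cast_div, lt_div_iff₀ (by exact_mod_cast hnR j)]
    push_cast
    linarith [(hm j).1]
  have hceil : ∀ i, ⌈q * n i⌉ = m i := fun i => by
    rw [Int.ceil_eq_iff]
    constructor
    · have : t * n i < q * n i := mul_lt_mul_of_pos_right htq (hnR i)
      exact_mod_cast (show ((m i : ℚ) - 1 : ℝ) < (q * n i : ℚ) by push_cast; linarith [(hm i).2])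
    · exact (le_div_iff₀ (hnQ i)).1 (hj i)
  have hmj : 0 < m j ∧ m j ≤ n j := by
    have h0 : (0 : ℝ) < m j := by nlinarith [(hm j).1, ht.1, hnR j]
    have h1 : (m j : ℝ) < n j + 1 := by nlinarith [(hm j).2, ht.2, hnR j]
    exact ⟨by exact_mod_cast h0, Int.lt_add_one_iff.1 (by exact_mod_cast h1)⟩
  refine ⟨q, ⟨div_pos (by exact_mod_cast hmj.1) (hnQ j), ?_, j, ?_⟩, hceil⟩
  · exact (div_le_one (hnQ j)).2 (by exact_mod_cast hmj.2)
  · rw [hq, ← Rat.divInt_eq_div]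
    exact Rat.den_dvd _ _

theorem injOn_ceil_mul (hn : ∀ i, 0 < n i) :
    InjOn (fun (q : ℚ) i => ⌈q * n i⌉) {q | ∃ j, (q.den : ℤ) ∣ n j} := by
  have ceil_ne_of_lt : ∀ q q' : ℚ, q < q' → ∀ j, (q.den : ℤ) ∣ n j → ⌈q * n j⌉ ≠ ⌈q' * n j⌉ := by
    rintro q q' hqq' j ⟨c, hc⟩
    have hint : q * n j = (q.num * c : ℤ) := by
      rw [hc]
      push_cast
      rw [← mul_assoc, Rat.mul_den_eq_num]
    refine (Int.lt_ceil.2 ?_).ne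
    rw [hint, Int.ceil_intCast, ← hint]
    exact mul_lt_mul_of_pos_right hqq' (by exact_mod_cast hn j)
  intro q ⟨j, hj⟩ q' ⟨j', hj'⟩ h
  rcases lt_trichotomy q q' with hlt | heq | hgt
  · exact absurd (congrFun h j) (ceil_ne_of_lt q q' hlt j hj)
  · exact heq
  · exact absurd (congrFun h j').symm (ceil_ne_of_lt q' q hgt j' hj')

theorem coe_fractionsWithDenIn_biUnion_divisors [Fintype ι] (hn : ∀ i, 0 < n i) :
    (fractionsWithDenIn (Finset.univ.biUnion fun j => (n j).toNat.divisors) : Set ℚ) =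
      {q | 0 < q ∧ q ≤ 1 ∧ ∃ j, (q.den : ℤ) ∣ n j} := by
  ext q
  have hdvd : ∀ j, q.den ∈ (n j).toNat.divisors ↔ (q.den : ℤ) ∣ n j := fun j => by
    have hj := hn j
    rw [Nat.mem_divisors, Int.natCast_dvd, show (n j).toNat = (n j).natAbs by omega]
    exact and_iff_left (by omega)
  simp [mem_fractionsWithDenIn, hdvd]

end Ceil

theorem setOf_mem_interior_isLatticePoint_eq_image_ceil {d : ℕ} [Nonempty (Fin d)] {n : Fin d → ℤ}
    (hn : ∀ i, 0 < n i) :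
    {x | x ∈ interior ((univ.pi fun _ => Icc 0 1) + segment ℝ 0 fun i => (n i : ℝ)) ∧
        IsLatticePoint x} =
      (fun (q : ℚ) i => ((⌈q * n i⌉ : ℤ) : ℝ)) '' {q | 0 < q ∧ q ≤ 1 ∧ ∃ j, (q.den : ℤ) ∣ n j} := by
  ext x
  simp only [interior_pi_Icc_add_segment, mem_pi_Ioo_add_openSegment_iff, mem_image]
  constructor
  · rintro ⟨⟨t, ht, hx⟩, hlat⟩
    choose m hm using hlat
    obtain rfl : x = fun i => (m i : ℝ) := funext hm
    obtain ⟨q, hq, hceil⟩ := exists_ceil_mul_eq hn ht hx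
    exact ⟨q, hq, funext fun i => by rw [hceil]⟩
  · rintro ⟨q, ⟨hq0, hq1, -⟩, rfl⟩
    exact ⟨exists_mem_Ioo_forall_ceil_sub_mul_mem_Ioo hn hq0 hq1, fun i => ⟨_, rfl⟩⟩

theorem num_interior_lattice_points_lonely_runner_zonotope_general
    {d : ℕ} (hd : 2 ≤ d) (n : Fin d → ℤ) (hpos : ∀ i, 0 < n i)
    (Z : Set (Fin d → ℝ))
    (hZ : Z = (∑ j : Fin d, segment ℝ (0 : Fin d → ℝ) (Pi.single j 1)) +
      segment ℝ (0 : Fin d → ℝ) (fun i => (n i : ℝ))) :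
    {x | x ∈ interior Z ∧ IsLatticePoint x}.ncard =
      ∑ ℓ ∈ Finset.univ.biUnion (fun j : Fin d => (n j).toNat.divisors), ℓ.totient := by
  subst hZ
  have : Nonempty (Fin d) := ⟨⟨0, by omega⟩⟩
  rw [sum_segment_zero_single, setOf_mem_interior_isLatticePoint_eq_image_ceil hpos, InjOn.ncard_image,
    ← coe_fractionsWithDenIn_biUnion_divisors hpos, ncard_coe_finset, card_fractionsWithDenIn]
  exact Int.cast_injective.comp_left.comp_injOn ((injOn_ceil_mul hpos).mono fun _ hq => hq.2.2)

theorem num_interior_lattice_points_lonely_runner_zonotope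
    {d : ℕ} (hd : 2 ≤ d) (n : Fin d → ℤ) (hpos : ∀ i, 0 < n i)
    (hdist : Function.Injective n) (hgcd : Finset.univ.gcd n = 1)
    (Z : Set (Fin d → ℝ))
    (hZ : Z = (∑ j : Fin d, segment ℝ (0 : Fin d → ℝ) (Pi.single j 1)) +
      segment ℝ (0 : Fin d → ℝ) (fun i => (n i : ℝ))) :
    {x | x ∈ interior Z ∧ IsLatticePoint x}.ncard =
      ∑ ℓ ∈ Finset.univ.biUnion (fun j : Fin d => (n j).toNat.divisors), ℓ.totient :=
  num_interior_lattice_points_lonely_runner_zonotope_general hd n hpos Z hZ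
end
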